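/- arXiv:2101.12370 — 5 statements merged into one kernel-verified Lean document; each statement's English description precedes it below -/
import Mathlib

section
/- Conditional independence rule (consequence of the copy lemma): Let n, k, l, m_A, m ∈ ℕ, and let A : Fin m_A → (nonempty subsets of Fin(n+k)) → ℝ, B : Fin m → (nonempty subsets of Fin(n+l)) → ℝ, C : Fin m → (nonempty subsets of Fin(n+k)) → ℝ be coefficient matrices. Suppose that for every probability space and all finite-valued random variables X₁,…,Xₙ,Y₁,…,Y_k satisfying Σ_S A(j,S)·H((X,Y)_S) ≥ 0 for all j ∈ Fin m_A (where (X,Y)_S denotes the joint random variable of the components of (X₁,…,Xₙ,Y₁,…,Y_k) indexed by S), there exist a probability space and finite-valued random variables X′₁,…,X′ₙ, Y′₁,…,Y′_k, U₁,…,U_l with (X′,Y′) identically distributed with (X,Y) and Σ_S B(j,S)·H((X′,U)_S) + Σ_T C(j,T)·H((X′,Y′)_T) ≥ 0 for all j ∈ Fin m. Then for every probability space and all such X, Y satisfying the same hypothesis, there exist a probability space and finite-valued random variables X″, Y″, U with (X″,Y″) identically distributed with (X,Y), satisfying Σ_S B(j,S)·H((X″,U)_S) + Σ_T C(j,T)·H((X″,Y″)_T)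 ≥ 0 for all j ∈ Fin m, and additionally I(U₁,…,U_l ; Y″₁,…,Y″_k | X″₁,…,X″ₙ) = 0. -/
open MeasureTheory

/-- Shannon entropy (in bits) of a discrete random variable `X` under measure `μ`,
with the convention `0 · log 0 = 0`. -/
noncomputable def ent {Ω : Type*} [MeasurableSpace Ω] (μ : Measure Ω) {S : Type*}
    (X : Ω → S) : ℝ :=
  ∑' s : S, -((μ (X ⁻¹' {s})).toReal * Real.logb 2 (μ (X ⁻¹' {s})).toReal)

/-- Conditional entropy `H(X | Y)`. -/
noncomputable def condEnt {Ω : Type*} [MeasurableSpace Ω] (μ : Measure Ω) {S T : Type*}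
    (X : Ω → S) (Y : Ω → T) : ℝ :=
  ent μ (fun ω => (X ω, Y ω)) - ent μ Y

/-- Mutual information `I(X ; Y)`. -/
noncomputable def mi {Ω : Type*} [MeasurableSpace Ω] (μ : Measure Ω) {S T : Type*}
    (X : Ω → S) (Y : Ω → T) : ℝ :=
  ent μ X + ent μ Y - ent μ (fun ω => (X ω, Y ω))

/-- Conditional mutual information `I(X ; Y | Z)`. -/
noncomputable def cmi {Ω : Type*} [MeasurableSpace Ω] (μ : Measure Ω) {S T V : Type*}
    (X : Ω → S) (Y : Ω → T) (Z : Ω → V) : ℝ :=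
  ent μ (fun ω => (X ω, Z ω)) + ent μ (fun ω => (Y ω, Z ω))
    - ent μ (fun ω => (X ω, Y ω, Z ω)) - ent μ Z

/-- A function into a discrete value space is a random variable iff every
preimage of a point is measurable. -/
def DMeasurable {Ω : Type*} [MeasurableSpace Ω] {S : Type*} (X : Ω → S) : Prop :=
  ∀ s : S, MeasurableSet (X ⁻¹' {s})

/-- Two discrete random variables (possibly on different probability spaces)
are identically distributed. -/
def IdentDist {Ω Ω' : Type*} [MeasurableSpace Ω] [MeasurableSpace Ω'] (μ : Measure Ω)
    (ν : Measure Ω') {S : Type*} (X : Ω → S) (Y : Ω' → S) : Prop :=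
  ∀ s : S, μ (X ⁻¹' {s}) = ν (Y ⁻¹' {s})

/-- Joint entropy `H(Z_S)` of the components of the tuple `Z` indexed by the
subset `S`. -/
noncomputable def jEnt {Ω : Type} [MeasurableSpace Ω] (μ : Measure Ω) {r : ℕ}
    {W : Fin r → Type} (Z : ∀ i, Ω → W i) (S : Finset (Fin r)) : ℝ :=
  ent μ (fun ω => fun i : {i : Fin r // i ∈ S} => Z i.1 ω)

/-- Joint entropy `H((X,U)_S)` where `(X,U)` is the concatenated tuple (indexed by
`Fin (n + l)`, with `Xᵢ` at position `i < n` and `Uⱼ` at position `n + j`) and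
`S ⊆ Fin (n + l)`. -/
noncomputable def jEnt2 {Ω : Type} [MeasurableSpace Ω] (μ : Measure Ω) {n l : ℕ}
    {W : Fin n → Type} {V : Fin l → Type}
    (X : ∀ i, Ω → W i) (U : ∀ j, Ω → V j) (S : Finset (Fin (n + l))) : ℝ :=
  ent μ (fun ω =>
    ((fun i : {i : Fin n // Fin.castAdd l i ∈ S} => X i.1 ω),
     (fun j : {j : Fin l // Fin.natAdd n j ∈ S} => U j.1 ω)))

open scoped ENNReal

section Aux
variable {Ω : Type*} [MeasurableSpace Ω] {Ω' : Type*} [MeasurableSpace Ω']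
variable {Ω₃ : Type*} [MeasurableSpace Ω₃]

lemma ent_congr {S : Type*} {μ : Measure Ω} {ν : Measure Ω'} {f : Ω → S} {g : Ω' → S}
    (h : IdentDist μ ν f g) : ent μ f = ent ν g := by
  unfold ent; exact tsum_congr fun s => by rw [h s]

lemma identDist_trans {S : Type*} {μ : Measure Ω} {ν : Measure Ω'} {ρ : Measure Ω₃}
    {f : Ω → S} {g : Ω' → S} {h : Ω₃ → S}
    (h1 : IdentDist μ ν f g) (h2 : IdentDist ν ρ g h) : IdentDist μ ρ f h :=
  fun s => (h1 s).trans (h2 s)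

lemma dMeasurable_pair {S T : Type*} {f : Ω → S} {g : Ω → T}
    (hf : DMeasurable f) (hg : DMeasurable g) :
    DMeasurable (fun ω => (f ω, g ω)) := fun p => by
  have : (fun ω => (f ω, g ω)) ⁻¹' {p} = f ⁻¹' {p.1} ∩ g ⁻¹' {p.2} := by
    ext ω; simp [Prod.ext_iff]
  rw [this]; exact (hf _).inter (hg _)

lemma dMeasurable_pi {ι : Type*} [Fintype ι] {S : ι → Type*} {f : ∀ i, Ω → S i}
    (hf : ∀ i, DMeasurable (f i)) : DMeasurable (fun ω => fun i => f i ω) := fun s => by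
  have : (fun ω => fun i => f i ω) ⁻¹' {s} = ⋂ i, (f i) ⁻¹' {s i} := by
    ext ω; simp [funext_iff]
  rw [this]; exact MeasurableSet.iInter fun i => hf i _

lemma measure_preimage_eq_sum {S : Type*} [Fintype S] (μ : Measure Ω) {f : Ω → S}
    (hf : DMeasurable f) (E : Set S) [DecidablePred (· ∈ E)] :
    μ (f ⁻¹' E) = ∑ s ∈ Finset.univ.filter (· ∈ E), μ (f ⁻¹' {s}) := by
  rw [show f ⁻¹' E = ⋃ s ∈ Finset.univ.filter (· ∈ E), f ⁻¹' {s} by ext ω; simp]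
  rw [measure_biUnion_finset ?_ fun s _ => hf s]
  intro s _ t _ hst
  exact Set.disjoint_left.mpr fun ω h1 h2 => hst (by
    simp only [Set.mem_preimage, Set.mem_singleton_iff] at h1 h2; rw [← h1, ← h2])

lemma identDist_comp {S T : Type*} [Fintype S] {μ : Measure Ω} {ν : Measure Ω'}
    {f : Ω → S} {g : Ω' → S}
    (hf : DMeasurable f) (hg : DMeasurable g) (h : IdentDist μ ν f g) (φ : S → T) :
    IdentDist μ ν (fun ω => φ (f ω)) (fun ω => φ (g ω)) := fun t => by
  classical
  have h1 : (fun ω => φ (f ω)) ⁻¹' {t} = f ⁻¹' (φ ⁻¹' {t}) := rfl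
  have h2 : (fun ω => φ (g ω)) ⁻¹' {t} = g ⁻¹' (φ ⁻¹' {t}) := rfl
  rw [h1, h2, measure_preimage_eq_sum μ hf, measure_preimage_eq_sum ν hg]
  exact Finset.sum_congr rfl fun s _ => h s

lemma sum_measure_preimage {S : Type*} [Fintype S] (μ : Measure Ω) {f : Ω → S}
    (hf : DMeasurable f) : ∑ s : S, μ (f ⁻¹' {s}) = μ Set.univ := by
  classical
  have h := measure_preimage_eq_sum μ hf Set.univ
  simpa using h.symm

lemma measure_preimage_fst {S T : Type*} [Fintype T] (μ : Measure Ω) {f : Ω → S} {g : Ω → T}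
    (hfg : DMeasurable (fun ω => (f ω, g ω))) (s : S) :
    μ (f ⁻¹' {s}) = ∑ t : T, μ ((fun ω => (f ω, g ω)) ⁻¹' {(s, t)}) := by
  have h1 : f ⁻¹' {s} = ⋃ t : T, (fun ω => (f ω, g ω)) ⁻¹' {(s, t)} := by
    ext ω; simp [Prod.ext_iff]
  rw [h1, measure_iUnion ?_ fun t => hfg _, tsum_fintype]
  intro t t' htt'
  refine Set.disjoint_left.mpr fun ω h1 h2 => htt' ?_
  simp only [Set.mem_preimage, Set.mem_singleton_iff, Prod.ext_iff] at h1 h2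
  rw [← h1.2, ← h2.2]

lemma ent_fintype {S : Type*} [Fintype S] (μ : Measure Ω) (f : Ω → S) :
    ent μ f = ∑ s : S, -((μ (f ⁻¹' {s})).toReal * Real.logb 2 (μ (f ⁻¹' {s})).toReal) :=
  tsum_fintype _

end Aux


noncomputable def phiR (t : ℝ) : ℝ := -(t * Real.logb 2 t)

lemma phiR_zero : phiR 0 = 0 := by simp [phiR]

lemma real_core {ι κ : Type*} [Fintype ι] [Fintype κ] (A : ι → ℝ) (B : κ → ℝ) (C : ℝ)
    (hA : ∀ i, 0 ≤ A i) (hB : ∀ j, 0 ≤ B j) (hAC : ∑ i, A i = C) (hBC : ∑ j, B j = C) :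
    ∑ i, ∑ j, phiR (A i * B j / C) = ∑ i, phiR (A i) + ∑ j, phiR (B j) - phiR C := by
  rcases eq_or_lt_of_le (by rw [← hAC]; exact Finset.sum_nonneg fun i _ => hA i : (0:ℝ) ≤ C)
    with hC0 | hCpos
  · -- C = 0
    have hA0 : ∀ i, A i = 0 := fun i => by
      have := (Finset.sum_eq_zero_iff_of_nonneg (fun i _ => hA i)).mp (hAC.trans hC0.symm)
      exact this i (Finset.mem_univ i)
    have hB0 : ∀ j, B j = 0 := fun j => by
      have := (Finset.sum_eq_zero_iff_of_nonneg (fun j _ => hB j)).mp (hBC.trans hC0.symm)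
      exact this j (Finset.mem_univ j)
    simp [hA0, hB0, ← hC0, phiR]
  · have hCne : C ≠ 0 := ne_of_gt hCpos
    have key : ∀ i j, phiR (A i * B j / C)
        = phiR (A i) * (B j / C) + (A i / C) * phiR (B j)
          - (A i / C) * ((B j / C) * phiR C) := by
      intro i j
      rcases eq_or_lt_of_le (hA i) with hAi | hAi
      · simp [← hAi, phiR]
      rcases eq_or_lt_of_le (hB j) with hBj | hBj
      · simp [← hBj, phiR]
      have hlog : Real.logb 2 (A i * B j / C)
          = Real.logb 2 (A i) + Real.logb 2 (B j) - Real.logb 2 C := by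
        rw [Real.logb_div (by positivity) hCne, Real.logb_mul (ne_of_gt hAi) (ne_of_gt hBj)]
      unfold phiR
      rw [hlog]
      field_simp
      ring
    simp only [key, Finset.sum_add_distrib, Finset.sum_sub_distrib]
    have h1 : ∑ i, ∑ j, phiR (A i) * (B j / C) = ∑ i, phiR (A i) := by
      rw [← Finset.sum_mul_sum, ← Finset.sum_div, hBC, div_self hCne, mul_one]
    have h2 : ∑ i, ∑ j, (A i / C) * phiR (B j) = ∑ j, phiR (B j) := by
      rw [← Finset.sum_mul_sum, ← Finset.sum_div, hAC, div_self hCne, one_mul]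
    have h3 : ∑ i, ∑ j, (A i / C) * ((B j / C) * phiR C) = phiR C := by
      rw [← Finset.sum_mul_sum, ← Finset.sum_div, hAC, div_self hCne, one_mul,
        ← Finset.sum_mul, ← Finset.sum_div, hBC, div_self hCne, one_mul]
    rw [h1, h2, h3]

section CP
variable {X Y U : Type} [Fintype X] [Fintype Y] [Fintype U]

noncomputable def cpQ (a : X × Y → ℝ≥0∞) (b : X × U → ℝ≥0∞) (c : X → ℝ≥0∞) :
    X × Y × U → ℝ≥0∞ := fun ω => a (ω.1, ω.2.1) * b (ω.1, ω.2.2) / c ω.1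

noncomputable def cpMeasure (a : X × Y → ℝ≥0∞) (b : X × U → ℝ≥0∞) (c : X → ℝ≥0∞) :
    @Measure (X × Y × U) ⊤ :=
  ∑ ω : X × Y × U, cpQ a b c ω • @Measure.dirac _ ⊤ ω

lemma cpMeasure_apply (a : X × Y → ℝ≥0∞) (b : X × U → ℝ≥0∞) (c : X → ℝ≥0∞)
    (E : Set (X × Y × U)) :
    cpMeasure a b c E = ∑ ω, E.indicator (cpQ a b c) ω := by
  classical
  rw [cpMeasure, Measure.finset_sum_apply]
  refine Finset.sum_congr rfl fun ω _ => ?_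
  rw [Measure.smul_apply, @Measure.dirac_apply' _ ⊤ _ _ (MeasurableSpace.measurableSet_top)]
  simp [Set.indicator_apply]

variable {a : X × Y → ℝ≥0∞} {b : X × U → ℝ≥0∞} {c : X → ℝ≥0∞}

lemma cp_a_le (ha : ∀ x, ∑ y, a (x, y) = c x) (x : X) (y : Y) : a (x, y) ≤ c x := by
  rw [← ha x]
  exact Finset.single_le_sum (f := fun y => a (x, y)) (fun y _ => zero_le) (Finset.mem_univ y)

lemma cp_b_le (hb : ∀ x, ∑ u, b (x, u) = c x) (x : X) (u : U) : b (x, u) ≤ c x := by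
  rw [← hb x]
  exact Finset.single_le_sum (f := fun u => b (x, u)) (fun u _ => zero_le) (Finset.mem_univ u)

lemma cp_sum_u (ha : ∀ x, ∑ y, a (x, y) = c x) (hb : ∀ x, ∑ u, b (x, u) = c x)
    (hc : ∀ x, c x ≠ ∞) (x : X) (y : Y) :
    ∑ u, cpQ a b c (x, y, u) = a (x, y) := by
  unfold cpQ
  simp only [div_eq_mul_inv]
  rw [← Finset.sum_mul, ← Finset.mul_sum, hb x]
  rcases eq_or_ne (c x) 0 with h0 | h0
  · have : a (x, y) = 0 := le_antisymm (h0 ▸ cp_a_le ha x y) (zero_le)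
    simp [this]
  · rw [mul_assoc, ENNReal.mul_inv_cancel h0 (hc x), mul_one]

lemma cp_sum_y (ha : ∀ x, ∑ y, a (x, y) = c x) (hb : ∀ x, ∑ u, b (x, u) = c x)
    (hc : ∀ x, c x ≠ ∞) (x : X) (u : U) :
    ∑ y, cpQ a b c (x, y, u) = b (x, u) := by
  unfold cpQ
  simp only [div_eq_mul_inv]
  rw [← Finset.sum_mul, ← Finset.sum_mul, ha x]
  rcases eq_or_ne (c x) 0 with h0 | h0
  · have : b (x, u) = 0 := le_antisymm (h0 ▸ cp_b_le hb x u) (zero_le)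
    simp [this]
  · rw [mul_right_comm, mul_comm (c x) ((c x)⁻¹), ENNReal.inv_mul_cancel h0 (hc x), one_mul]


lemma cp_sum_yu (ha : ∀ x, ∑ y, a (x, y) = c x) (hb : ∀ x, ∑ u, b (x, u) = c x)
    (hc : ∀ x, c x ≠ ∞) (x : X) :
    ∑ y, ∑ u, cpQ a b c (x, y, u) = c x := by
  rw [Finset.sum_congr rfl fun y _ => cp_sum_u ha hb hc x y, ha x]


lemma cp_dist_x (ha : ∀ x, ∑ y, a (x, y) = c x) (hb : ∀ x, ∑ u, b (x, u) = c x)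
    (hc : ∀ x, c x ≠ ∞) (x : X) :
    cpMeasure a b c ((fun ω : X × Y × U => ω.1) ⁻¹' {x}) = c x := by
  classical
  rw [cpMeasure_apply, Fintype.sum_prod_type,
    Fintype.sum_eq_single x (fun x' hx' => Finset.sum_eq_zero fun p _ => by
      simp [Set.indicator_apply, hx'])]
  rw [← cp_sum_yu ha hb hc x, Fintype.sum_prod_type]
  simp [Set.indicator_apply]

lemma cp_dist_xy (ha : ∀ x, ∑ y, a (x, y) = c x) (hb : ∀ x, ∑ u, b (x, u) = c x)
    (hc : ∀ x, c x ≠ ∞) (p : X × Y) :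
    cpMeasure a b c ((fun ω : X × Y × U => (ω.1, ω.2.1)) ⁻¹' {p}) = a p := by
  classical
  obtain ⟨x, y⟩ := p
  rw [cpMeasure_apply, Fintype.sum_prod_type,
    Fintype.sum_eq_single x (fun x' hx' => Finset.sum_eq_zero fun q _ => by
      simp [Set.indicator_apply, Prod.ext_iff, hx'])]
  rw [Fintype.sum_prod_type,
    Fintype.sum_eq_single y (fun y' hy' => Finset.sum_eq_zero fun u _ => by
      simp [Set.indicator_apply, Prod.ext_iff, hy'])]
  rw [← cp_sum_u ha hb hc x y]
  simp [Set.indicator_apply]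

lemma cp_dist_xu (ha : ∀ x, ∑ y, a (x, y) = c x) (hb : ∀ x, ∑ u, b (x, u) = c x)
    (hc : ∀ x, c x ≠ ∞) (p : X × U) :
    cpMeasure a b c ((fun ω : X × Y × U => (ω.1, ω.2.2)) ⁻¹' {p}) = b p := by
  classical
  obtain ⟨x, u⟩ := p
  rw [cpMeasure_apply, Fintype.sum_prod_type,
    Fintype.sum_eq_single x (fun x' hx' => Finset.sum_eq_zero fun q _ => by
      simp [Set.indicator_apply, Prod.ext_iff, hx'])]
  rw [Fintype.sum_prod_type]
  rw [Finset.sum_comm]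
  rw [Fintype.sum_eq_single u (fun u' hu' => Finset.sum_eq_zero fun y _ => by
      simp [Set.indicator_apply, Prod.ext_iff, hu'])]
  rw [← cp_sum_y ha hb hc x u]
  simp [Set.indicator_apply]

lemma cp_dist_ux (ha : ∀ x, ∑ y, a (x, y) = c x) (hb : ∀ x, ∑ u, b (x, u) = c x)
    (hc : ∀ x, c x ≠ ∞) (p : U × X) :
    cpMeasure a b c ((fun ω : X × Y × U => (ω.2.2, ω.1)) ⁻¹' {p}) = b (p.2, p.1) := by
  have h : ((fun ω : X × Y × U => (ω.2.2, ω.1)) ⁻¹' {p})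
      = ((fun ω : X × Y × U => (ω.1, ω.2.2)) ⁻¹' {(p.2, p.1)}) := by
    ext ω; simp [Prod.ext_iff, and_comm]
  rw [h, cp_dist_xu ha hb hc]

lemma cp_dist_yx (ha : ∀ x, ∑ y, a (x, y) = c x) (hb : ∀ x, ∑ u, b (x, u) = c x)
    (hc : ∀ x, c x ≠ ∞) (p : Y × X) :
    cpMeasure a b c ((fun ω : X × Y × U => (ω.2.1, ω.1)) ⁻¹' {p}) = a (p.2, p.1) := by
  have h : ((fun ω : X × Y × U => (ω.2.1, ω.1)) ⁻¹' {p})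
      = ((fun ω : X × Y × U => (ω.1, ω.2.1)) ⁻¹' {(p.2, p.1)}) := by
    ext ω; simp [Prod.ext_iff, and_comm]
  rw [h, cp_dist_xy ha hb hc]

lemma cp_dist_uyx (p : U × Y × X) :
    cpMeasure a b c ((fun ω : X × Y × U => (ω.2.2, ω.2.1, ω.1)) ⁻¹' {p})
      = cpQ a b c (p.2.2, p.2.1, p.1) := by
  classical
  rw [cpMeasure_apply]
  rw [Fintype.sum_eq_single ((p.2.2, p.2.1, p.1) : X × Y × U) (fun ω hω => by
    simp only [Set.indicator_apply, Set.mem_preimage, Set.mem_singleton_iff]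
    rw [if_neg]
    intro h
    apply hω
    rw [← h])]
  simp [Set.indicator_apply]

lemma cp_isProb (ha : ∀ x, ∑ y, a (x, y) = c x) (hb : ∀ x, ∑ u, b (x, u) = c x)
    (hc : ∀ x, c x ≠ ∞) (hcsum : ∑ x, c x = 1) :
    IsProbabilityMeasure (cpMeasure a b c) := by
  constructor
  rw [cpMeasure_apply, Set.indicator_univ, Fintype.sum_prod_type]
  have h : ∀ x : X, ∑ p : Y × U, cpQ a b c (x, p) = c x := fun x => by
    rw [Fintype.sum_prod_type]; exact cp_sum_yu ha hb hc x
  rw [Finset.sum_congr rfl fun x _ => h x, hcsum]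

set_option maxHeartbeats 1000000 in
lemma cp_cmi (ha : ∀ x, ∑ y, a (x, y) = c x) (hb : ∀ x, ∑ u, b (x, u) = c x)
    (hc : ∀ x, c x ≠ ∞) :
    @ent _ ⊤ (cpMeasure a b c) _ (fun ω => (ω.2.2, ω.1))
      + @ent _ ⊤ (cpMeasure a b c) _ (fun ω => (ω.2.1, ω.1))
      - @ent _ ⊤ (cpMeasure a b c) _ (fun ω => (ω.2.2, ω.2.1, ω.1))
      - @ent _ ⊤ (cpMeasure a b c) _ (fun ω => ω.1) = 0 := by
  letI : MeasurableSpace (X × Y × U) := ⊤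
  classical
  rw [ent_fintype, ent_fintype, ent_fintype, ent_fintype]
  simp only [cp_dist_ux ha hb hc, cp_dist_yx ha hb hc,
    cp_dist_uyx (a := a) (b := b) (c := c), cp_dist_x ha hb hc]
  -- now a pure sum identity
  have e1 : ∑ p : U × X, -((b (p.2, p.1)).toReal * Real.logb 2 (b (p.2, p.1)).toReal)
      = ∑ x, ∑ u, phiR (b (x, u)).toReal := by
    rw [Fintype.sum_prod_type, Finset.sum_comm]; rfl
  have e2 : ∑ p : Y × X, -((a (p.2, p.1)).toReal * Real.logb 2 (a (p.2, p.1)).toReal)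
      = ∑ x, ∑ y, phiR (a (x, y)).toReal := by
    rw [Fintype.sum_prod_type, Finset.sum_comm]; rfl
  have e3 : ∑ p : U × Y × X,
        -((cpQ a b c (p.2.2, p.2.1, p.1)).toReal
          * Real.logb 2 (cpQ a b c (p.2.2, p.2.1, p.1)).toReal)
      = ∑ x, ∑ y, ∑ u, phiR (cpQ a b c (x, y, u)).toReal := by
    rw [show ∑ x, ∑ y, ∑ u, phiR (cpQ a b c (x, y, u)).toReal
        = ∑ ω : X × Y × U, phiR (cpQ a b c ω).toReal by
      rw [Fintype.sum_prod_type]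
      exact Finset.sum_congr rfl fun x _ => (Fintype.sum_prod_type (fun p : Y × U => phiR (cpQ a b c (x, p)).toReal)).symm]
    exact Fintype.sum_equiv
      ⟨fun p : U × Y × X => ((p.2.2, p.2.1, p.1) : X × Y × U),
       fun ω : X × Y × U => (ω.2.2, ω.2.1, ω.1), fun p => rfl, fun ω => rfl⟩
      _ _ (fun p => rfl)
  have e4 : ∑ x, -((c x).toReal * Real.logb 2 (c x).toReal) = ∑ x, phiR (c x).toReal := rfl
  rw [e1, e2, e3, e4]
  rw [← Finset.sum_add_distrib, ← Finset.sum_sub_distrib, ← Finset.sum_sub_distrib]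
  apply Finset.sum_eq_zero
  intro x _
  have hane : ∀ y, a (x, y) ≠ ∞ := fun y => (lt_of_le_of_lt (cp_a_le ha x y)
    (lt_top_iff_ne_top.mpr (hc x))).ne
  have hbne : ∀ u, b (x, u) ≠ ∞ := fun u => (lt_of_le_of_lt (cp_b_le hb x u)
    (lt_top_iff_ne_top.mpr (hc x))).ne
  have hAC : ∑ y, (a (x, y)).toReal = (c x).toReal := by
    rw [← ENNReal.toReal_sum (fun y _ => hane y), ha x]
  have hBC : ∑ u, (b (x, u)).toReal = (c x).toReal := by
    rw [← ENNReal.toReal_sum (fun u _ => hbne u), hb x]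
  have core := real_core (fun y => (a (x, y)).toReal) (fun u => (b (x, u)).toReal)
    ((c x).toReal) (fun y => ENNReal.toReal_nonneg) (fun u => ENNReal.toReal_nonneg) hAC hBC
  have hq : ∀ y u, (cpQ a b c (x, y, u)).toReal
      = (a (x, y)).toReal * (b (x, u)).toReal / (c x).toReal := by
    intro y u
    rw [show cpQ a b c (x, y, u) = a (x, y) * b (x, u) / c x from rfl,
      ENNReal.toReal_div, ENNReal.toReal_mul]
  rw [Finset.sum_congr rfl fun y _ => Finset.sum_congr rfl fun u _ => by rw [hq y u]]
  rw [core]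
  ring
end CP


def tupleSplit {n k : ℕ} {W : Fin (n + k) → Type} (i : Fin (n + k)) :
    ((∀ i' : Fin n, W (Fin.castAdd k i')) × (∀ j' : Fin k, W (Fin.natAdd n j'))) → W i :=
  Fin.addCases (motive := fun i => _ → W i) (fun i' p => p.1 i') (fun j' p => p.2 j') i

@[simp] lemma tupleSplit_castAdd {n k : ℕ} {W : Fin (n + k) → Type} (i' : Fin n)
    (p : (∀ i' : Fin n, W (Fin.castAdd k i')) × (∀ j' : Fin k, W (Fin.natAdd n j'))) :
    tupleSplit (W := W) (Fin.castAdd k i') p = p.1 i' := by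
  unfold tupleSplit
  rw [Fin.addCases_left]

@[simp] lemma tupleSplit_natAdd {n k : ℕ} {W : Fin (n + k) → Type} (j' : Fin k)
    (p : (∀ i' : Fin n, W (Fin.castAdd k i')) × (∀ j' : Fin k, W (Fin.natAdd n j'))) :
    tupleSplit (W := W) (Fin.natAdd n j') p = p.2 j' := by
  unfold tupleSplit
  rw [Fin.addCases_right]

/-- Conditional independence rule (consequence of the copy lemma).  The tuple
`(X₁,…,Xₙ,Y₁,…,Y_k)` is represented as a single tuple `Z` indexed by `Fin (n + k)`,
with `Xᵢ = Z (Fin.castAdd k i)` and `Yⱼ = Z (Fin.natAdd n j)`. -/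
theorem conditional_independence_rule (n k l mA m : ℕ)
    (A : Fin mA → {S : Finset (Fin (n + k)) // S.Nonempty} → ℝ)
    (B : Fin m → {S : Finset (Fin (n + l)) // S.Nonempty} → ℝ)
    (C : Fin m → {S : Finset (Fin (n + k)) // S.Nonempty} → ℝ)
    (hyp : ∀ (Ω : Type) [MeasurableSpace Ω] (μ : Measure Ω) [IsProbabilityMeasure μ]
      (W : Fin (n + k) → Type), (∀ i, Fintype (W i)) →
      ∀ (Z : ∀ i, Ω → W i), (∀ i, DMeasurable (Z i)) →
      (∀ j, 0 ≤ ∑ S : {S : Finset (Fin (n + k)) // S.Nonempty}, A j S * jEnt μ Z S.1) →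
      ∃ (Ω' : Type) (_ : MeasurableSpace Ω') (μ' : Measure Ω') (_ : IsProbabilityMeasure μ')
        (Z' : ∀ i, Ω' → W i)
        (𝒰 : Fin l → Type) (_ : ∀ j, Fintype (𝒰 j)) (U : ∀ j, Ω' → 𝒰 j),
        (∀ i, DMeasurable (Z' i)) ∧ (∀ j, DMeasurable (U j)) ∧
        IdentDist μ μ' (fun ω => fun i => Z i ω) (fun ω => fun i => Z' i ω) ∧
        (∀ j, 0 ≤ (∑ S : {S : Finset (Fin (n + l)) // S.Nonempty},
              B j S * jEnt2 μ' (fun i => Z' (Fin.castAdd k i)) U S.1)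
            + ∑ T : {S : Finset (Fin (n + k)) // S.Nonempty}, C j T * jEnt μ' Z' T.1)) :
    ∀ (Ω : Type) [MeasurableSpace Ω] (μ : Measure Ω) [IsProbabilityMeasure μ]
      (W : Fin (n + k) → Type), (∀ i, Fintype (W i)) →
      ∀ (Z : ∀ i, Ω → W i), (∀ i, DMeasurable (Z i)) →
      (∀ j, 0 ≤ ∑ S : {S : Finset (Fin (n + k)) // S.Nonempty}, A j S * jEnt μ Z S.1) →
      ∃ (Ω' : Type) (_ : MeasurableSpace Ω') (μ' : Measure Ω') (_ : IsProbabilityMeasure μ')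
        (Z' : ∀ i, Ω' → W i)
        (𝒰 : Fin l → Type) (_ : ∀ j, Fintype (𝒰 j)) (U : ∀ j, Ω' → 𝒰 j),
        (∀ i, DMeasurable (Z' i)) ∧ (∀ j, DMeasurable (U j)) ∧
        IdentDist μ μ' (fun ω => fun i => Z i ω) (fun ω => fun i => Z' i ω) ∧
        (∀ j, 0 ≤ (∑ S : {S : Finset (Fin (n + l)) // S.Nonempty},
              B j S * jEnt2 μ' (fun i => Z' (Fin.castAdd k i)) U S.1)
            + ∑ T : {S : Finset (Fin (n + k)) // S.Nonempty}, C j T * jEnt μ' Z' T.1) ∧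
        cmi μ' (fun ω => fun j : Fin l => U j ω)
          (fun ω => fun j : Fin k => Z' (Fin.natAdd n j) ω)
          (fun ω => fun i : Fin n => Z' (Fin.castAdd k i) ω) = 0 := by
  
  intro Ω mΩ μ pμ W FW Z hZm hZineq
  obtain ⟨Ω', mΩ', μ', pμ', Z', 𝒰, F𝒰, U, hZ'm, hUm, hID, hIneq⟩ :=
    hyp Ω μ W FW Z hZm hZineq
  letI := mΩ'
  haveI := pμ'
  haveI : ∀ i, Fintype (W i) := FW
  haveI : ∀ j, Fintype (𝒰 j) := F𝒰
  classical
  -- notation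
  let Xt := ∀ i : Fin n, W (Fin.castAdd k i)
  let Yt := ∀ j : Fin k, W (Fin.natAdd n j)
  let Ut := ∀ j : Fin l, 𝒰 j
  let fx : Ω' → Xt := fun ω i => Z' (Fin.castAdd k i) ω
  let fy : Ω' → Yt := fun ω j => Z' (Fin.natAdd n j) ω
  let fu : Ω' → Ut := fun ω j => U j ω
  have hfx : DMeasurable fx := dMeasurable_pi fun i => hZ'm _
  have hfy : DMeasurable fy := dMeasurable_pi fun j => hZ'm _
  have hfu : DMeasurable fu := dMeasurable_pi fun j => hUm j
  have hfxy : DMeasurable (fun ω => (fx ω, fy ω)) := dMeasurable_pair hfx hfy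
  have hfxu : DMeasurable (fun ω => (fx ω, fu ω)) := dMeasurable_pair hfx hfu
  let a : Xt × Yt → ENNReal := fun p => μ' ((fun ω => (fx ω, fy ω)) ⁻¹' {p})
  let b : Xt × Ut → ENNReal := fun p => μ' ((fun ω => (fx ω, fu ω)) ⁻¹' {p})
  let c : Xt → ENNReal := fun x => μ' (fx ⁻¹' {x})
  have ha : ∀ x, ∑ y, a (x, y) = c x := fun x => (measure_preimage_fst μ' hfxy x).symm
  have hb : ∀ x, ∑ u, b (x, u) = c x := fun x => (measure_preimage_fst μ' hfxu x).symm
  have hc : ∀ x, c x ≠ ⊤ := fun x => measure_ne_top μ' _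
  have hcsum : ∑ x, c x = 1 := by
    rw [show ∑ x, c x = μ' Set.univ from sum_measure_preimage μ' hfx]
    exact measure_univ
  haveI hQprob : IsProbabilityMeasure (cpMeasure a b c) := cp_isProb ha hb hc hcsum
  -- the new random variables
  have hsplit : ∀ (i : Fin (n + k)) (ω : Ω'), tupleSplit (W := W) i (fx ω, fy ω) = Z' i ω := by
    intro i ω
    induction i using Fin.addCases with
    | left i' => simp; rfl
    | right j' => simp; rfl
  letI : MeasurableSpace (Xt × Yt × Ut) := ⊤
  -- identically distributed pairs
  have hIDxy : IdentDist μ' (cpMeasure a b c) (fun ω => (fx ω, fy ω))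
      (fun ω : Xt × Yt × Ut => (ω.1, ω.2.1)) := fun p => (cp_dist_xy ha hb hc p).symm
  have hIDxu : IdentDist μ' (cpMeasure a b c) (fun ω => (fx ω, fu ω))
      (fun ω : Xt × Yt × Ut => (ω.1, ω.2.2)) := fun p => (cp_dist_xu ha hb hc p).symm
  have htopmeas : ∀ {S : Type} (f : Xt × Yt × Ut → S), DMeasurable f :=
    fun f s => MeasurableSpace.measurableSet_top
  refine ⟨Xt × Yt × Ut, ⊤, cpMeasure a b c, hQprob,
    (fun i ω => tupleSplit (W := W) i (ω.1, ω.2.1)), 𝒰, F𝒰, (fun j ω => ω.2.2 j),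
    fun i => htopmeas _, fun j => htopmeas _, ?_, ?_, ?_⟩
  · -- identically distributed tuples
    have h1 := identDist_comp hfxy (htopmeas _) hIDxy
      (fun p => fun i : Fin (n + k) => tupleSplit (W := W) i p)
    have e : (fun ω : Ω' => fun i : Fin (n + k) => tupleSplit (W := W) i (fx ω, fy ω))
        = fun ω => fun i => Z' i ω :=
      funext fun ω => funext fun i => hsplit i ω
    exact identDist_trans hID (e ▸ h1)
  · -- the inequalities
    have hjE : ∀ T : Finset (Fin (n + k)),
        jEnt (cpMeasure a b c) (fun i (ω : Xt × Yt × Ut) => tupleSplit (W := W) i (ω.1, ω.2.1)) T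
          = jEnt μ' Z' T := by
      intro T
      unfold jEnt
      refine (ent_congr ?_).symm
      have h := identDist_comp hfxy (htopmeas _) hIDxy
        (fun p => fun i : {i : Fin (n + k) // i ∈ T} => tupleSplit (W := W) i.1 p)
      have e : (fun ω : Ω' => fun i : {i : Fin (n + k) // i ∈ T} =>
            tupleSplit (W := W) i.1 (fx ω, fy ω))
          = fun ω => fun i : {i : Fin (n + k) // i ∈ T} => Z' i.1 ω :=
        funext fun ω => funext fun i => hsplit i.1 ω
      exact e ▸ h
    have hjE2 : ∀ S : Finset (Fin (n + l)),
        jEnt2 (cpMeasure a b c)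
          (fun i (ω : Xt × Yt × Ut) => tupleSplit (W := W) (Fin.castAdd k i) (ω.1, ω.2.1))
          (fun j (ω : Xt × Yt × Ut) => ω.2.2 j) S
          = jEnt2 μ' (fun i => Z' (Fin.castAdd k i)) U S := by
      intro S
      unfold jEnt2
      refine (ent_congr ?_).symm
      have h := identDist_comp hfxu (htopmeas _) hIDxu
        (fun p : Xt × Ut => ((fun i : {i : Fin n // Fin.castAdd l i ∈ S} => p.1 i.1),
          (fun j : {j : Fin l // Fin.natAdd n j ∈ S} => p.2 j.1)))
      have e : (fun ω : Xt × Yt × Ut =>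
            ((fun i : {i : Fin n // Fin.castAdd l i ∈ S} =>
                tupleSplit (W := W) (Fin.castAdd k i.1) (ω.1, ω.2.1)),
             (fun j : {j : Fin l // Fin.natAdd n j ∈ S} => ω.2.2 j.1)))
          = fun ω : Xt × Yt × Ut =>
            ((fun i : {i : Fin n // Fin.castAdd l i ∈ S} => ω.1 i.1),
             (fun j : {j : Fin l // Fin.natAdd n j ∈ S} => ω.2.2 j.1)) := by
        funext ω
        simp
      rw [e]
      exact h
    intro j
    refine le_of_le_of_eq (hIneq j) ?_
    congr 1
    · exact Finset.sum_congr rfl fun S _ => by rw [hjE2 S.1]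
    · exact Finset.sum_congr rfl fun T _ => by rw [hjE T.1]
  · -- conditional independence
    simp only [cmi, tupleSplit_castAdd, tupleSplit_natAdd]
    exact cp_cmi ha hb hc
end

section
/- Functional representation lemma: Let X and Y be random variables on a common probability space taking values in finite sets. Then there exist a probability space carrying random variables X′, Y′, U with values in finite (or countable) sets such that (X′,Y′) is identically distributed with (X,Y), I(X′;U) = 0 (U is independent of X′), and H(Y′ | X′, U) = 0 (Y′ is a function of (X′,U) almost surely). -/
open MeasureTheory

/-- entropy invariant under injective relabeling -/
lemma ent_comp_inj {Ω A B : Type*} [MeasurableSpace Ω] (μ : Measure Ω) (Z : Ω → A)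
    (φ : A → B) (hφ : Function.Injective φ) :
    ent μ (fun ω => φ (Z ω)) = ent μ Z := by
  unfold ent
  rw [← hφ.tsum_eq]
  · congr 1; ext a
    have : (fun ω => φ (Z ω)) ⁻¹' {φ a} = Z ⁻¹' {a} := by
      ext ω; simp [hφ.eq_iff]
    rw [this]
  · intro b hb
    simp only [Function.mem_support, ne_eq, not_not] at hb ⊢
    by_contra h
    apply hb
    have : (fun ω => φ (Z ω)) ⁻¹' {b} = ∅ := by
      ext ω; simp only [Set.mem_preimage, Set.mem_singleton_iff, Set.mem_empty_iff_false,
        iff_false]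
      intro he; exact h ⟨Z ω, he⟩
    simp [this]

lemma neg_mul_logb_prod (p q : ℝ) (hp : 0 ≤ p) (hq : 0 ≤ q) :
    -((p * q) * Real.logb 2 (p * q))
      = q * (-(p * Real.logb 2 p)) + p * (-(q * Real.logb 2 q)) := by
  rcases eq_or_lt_of_le hp with h | h
  · simp [← h]
  rcases eq_or_lt_of_le hq with h' | h'
  · simp [← h']
  rw [Real.logb_mul (ne_of_gt h) (ne_of_gt h')]
  ring

lemma sum_measure_preimage_eq_one {Ω S : Type*} [MeasurableSpace Ω] (μ : Measure Ω)
    [IsProbabilityMeasure μ] [Fintype S] (X : Ω → S)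
    (hX : ∀ s : S, MeasurableSet (X ⁻¹' {s})) :
    ∑ s : S, (μ (X ⁻¹' {s})).toReal = 1 := by
  have h1 : (⋃ s ∈ Finset.univ, X ⁻¹' {s}) = Set.univ := by
    ext ω; simp
  have h2 : μ (⋃ s ∈ Finset.univ, X ⁻¹' {s}) = ∑ s : S, μ (X ⁻¹' {s}) := by
    apply measure_biUnion_finset
    · intro a _ b _ hab
      exact Set.disjoint_left.2 (fun ω h1 h2 => by
        simp only [Set.mem_preimage, Set.mem_singleton_iff] at h1 h2
        exact hab (h1 ▸ h2 ▸ rfl))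
    · exact fun b _ => hX b
  rw [← ENNReal.toReal_sum (fun a _ => measure_ne_top μ _), ← h2, h1, measure_univ,
    ENNReal.toReal_one]

/-- entropy of independent pair -/
lemma ent_pair_indep {Ω S T : Type*} [MeasurableSpace Ω] (μ : Measure Ω)
    [IsProbabilityMeasure μ] [Fintype S] [Fintype T] (X : Ω → S) (Y : Ω → T)
    (hX : ∀ s : S, MeasurableSet (X ⁻¹' {s})) (hY : ∀ t : T, MeasurableSet (Y ⁻¹' {t}))
    (hind : ∀ s t, μ ((fun ω => (X ω, Y ω)) ⁻¹' {(s, t)}) = μ (X ⁻¹' {s}) * μ (Y ⁻¹' {t})) :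
    ent μ (fun ω => (X ω, Y ω)) = ent μ X + ent μ Y := by
  classical
  set p : S → ℝ := fun s => (μ (X ⁻¹' {s})).toReal with hp
  set q : T → ℝ := fun t => (μ (Y ⁻¹' {t})).toReal with hq
  have hps : ∑ s, p s = 1 := sum_measure_preimage_eq_one μ X hX
  have hqs : ∑ t, q t = 1 := sum_measure_preimage_eq_one μ Y hY
  unfold ent
  rw [tsum_fintype, tsum_fintype, tsum_fintype, Fintype.sum_prod_type]
  have key : ∀ s t, -((μ ((fun ω => (X ω, Y ω)) ⁻¹' {(s, t)})).toReal *
      Real.logb 2 (μ ((fun ω => (X ω, Y ω)) ⁻¹' {(s, t)})).toReal)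
      = q t * (-(p s * Real.logb 2 (p s))) + p s * (-(q t * Real.logb 2 (q t))) := by
    intro s t
    rw [hind s t, ENNReal.toReal_mul]
    exact neg_mul_logb_prod _ _ ENNReal.toReal_nonneg ENNReal.toReal_nonneg
  calc ∑ s, ∑ t, -((μ ((fun ω => (X ω, Y ω)) ⁻¹' {(s, t)})).toReal *
      Real.logb 2 (μ ((fun ω => (X ω, Y ω)) ⁻¹' {(s, t)})).toReal)
      = ∑ s, ∑ t, (q t * (-(p s * Real.logb 2 (p s))) + p s * (-(q t * Real.logb 2 (q t)))) := by
        exact Finset.sum_congr rfl fun s _ => Finset.sum_congr rfl fun t _ => key s t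
    _ = ∑ s, ((∑ t, q t) * (-(p s * Real.logb 2 (p s))) + p s * ∑ t, (-(q t * Real.logb 2 (q t)))) := by
        refine Finset.sum_congr rfl fun s _ => ?_
        rw [Finset.sum_add_distrib, ← Finset.sum_mul, ← Finset.mul_sum]
    _ = ∑ s, (-(p s * Real.logb 2 (p s)) + p s * ∑ t, (-(q t * Real.logb 2 (q t)))) := by
        simp [hqs]
    _ = ∑ s, (-(p s * Real.logb 2 (p s))) + ∑ t, (-(q t * Real.logb 2 (q t))) := by
        rw [Finset.sum_add_distrib, ← Finset.sum_mul, hps, one_mul]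

/-- Functional representation lemma. -/
theorem functional_representation_lemma {Ω 𝒳 𝒴 : Type} [MeasurableSpace Ω]
    (μ : Measure Ω) [IsProbabilityMeasure μ] [Fintype 𝒳] [Fintype 𝒴]
    (X : Ω → 𝒳) (Y : Ω → 𝒴) (hX : DMeasurable X) (hY : DMeasurable Y) :
    ∃ (Ω' : Type) (_ : MeasurableSpace Ω') (μ' : Measure Ω') (_ : IsProbabilityMeasure μ')
      (𝒰 : Type) (_ : Countable 𝒰) (X' : Ω' → 𝒳) (Y' : Ω' → 𝒴) (U : Ω' → 𝒰),
      DMeasurable X' ∧ DMeasurable Y' ∧ DMeasurable U ∧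
      IdentDist μ μ' (fun ω => (X ω, Y ω)) (fun ω => (X' ω, Y' ω)) ∧
      mi μ' X' U = 0 ∧
      condEnt μ' Y' (fun ω => (X' ω, U ω)) = 0 := by
  classical
  -- nonempty 𝒴
  have hΩ : Nonempty Ω := by
    by_contra h
    have : μ Set.univ = 0 := by
      rw [Set.univ_eq_empty_iff.2 (not_nonempty_iff.1 h)]; simp
    rw [measure_univ] at this; exact one_ne_zero this
  have h𝒴 : Nonempty 𝒴 := ⟨Y (Classical.choice hΩ)⟩
  obtain ⟨y₀⟩ := h𝒴
  -- discrete measurable structures on 𝒳, 𝒴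
  letI m𝒳 : MeasurableSpace 𝒳 := ⊤
  letI m𝒴 : MeasurableSpace 𝒴 := ⊤
  have hXm : Measurable X := measurable_to_countable' hX
  have hYm : Measurable Y := measurable_to_countable' hY
  -- marginal of X and conditional laws of Y given X
  set pX : Measure 𝒳 := μ.map X with hpX
  have hpXapp : ∀ x, pX {x} = μ (X ⁻¹' {x}) := fun x =>
    Measure.map_apply hXm (MeasurableSpace.measurableSet_top)
  haveI : IsProbabilityMeasure pX := Measure.isProbabilityMeasure_map hXm.aemeasurable
  set ν : 𝒳 → Measure 𝒴 := fun x =>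
    if μ (X ⁻¹' {x}) = 0 then Measure.dirac y₀
    else (μ (X ⁻¹' {x}))⁻¹ • ((μ.restrict (X ⁻¹' {x})).map Y) with hν
  have hνprob : ∀ x, IsProbabilityMeasure (ν x) := by
    intro x
    rw [hν]
    by_cases h : μ (X ⁻¹' {x}) = 0
    · simp only [h, if_true]; infer_instance
    · simp only [h, if_false]
      constructor
      rw [Measure.smul_apply, Measure.map_apply hYm MeasurableSet.univ, Set.preimage_univ,
        Measure.restrict_apply MeasurableSet.univ, Set.univ_inter, smul_eq_mul]
      exact ENNReal.inv_mul_cancel h (measure_ne_top μ _)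
  have hνkey : ∀ x y, pX {x} * ν x {y} = μ ((fun ω => (X ω, Y ω)) ⁻¹' {(x, y)}) := by
    intro x y
    have hset : (fun ω => (X ω, Y ω)) ⁻¹' {(x, y)} = Y ⁻¹' {y} ∩ X ⁻¹' {x} := by
      ext ω; simp [Prod.ext_iff, and_comm]
    rw [hset, hpXapp]
    by_cases h : μ (X ⁻¹' {x}) = 0
    · rw [h, zero_mul]
      exact (measure_mono_null Set.inter_subset_right h).symm
    · simp only [hν, h, if_false, Measure.smul_apply, smul_eq_mul,
        Measure.map_apply hYm (MeasurableSpace.measurableSet_top : MeasurableSet {y}),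
        Measure.restrict_apply (hY y)]
      rw [← mul_assoc, ENNReal.mul_inv_cancel h (measure_ne_top μ _), one_mul]
  -- the new space
  haveI : ∀ x, SigmaFinite (ν x) := fun x => haveI := hνprob x; inferInstance
  set πν : Measure (𝒳 → 𝒴) := Measure.pi ν with hπν
  haveI : IsProbabilityMeasure πν := by
    rw [hπν]; haveI := hνprob; infer_instance
  set μ' : Measure (𝒳 × (𝒳 → 𝒴)) := pX.prod πν with hμ'
  haveI : IsProbabilityMeasure μ' := by rw [hμ']; infer_instance
  -- all sets measurable in the new space
  haveI : MeasurableSingletonClass 𝒳 := ⟨fun _ => MeasurableSpace.measurableSet_top⟩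
  haveI : MeasurableSingletonClass 𝒴 := ⟨fun _ => MeasurableSpace.measurableSet_top⟩
  have hmeas : ∀ s : Set (𝒳 × (𝒳 → 𝒴)), MeasurableSet s := fun s =>
    s.to_countable.measurableSet
  set X' : 𝒳 × (𝒳 → 𝒴) → 𝒳 := fun p => p.1 with hX'
  set U : 𝒳 × (𝒳 → 𝒴) → (𝒳 → 𝒴) := fun p => p.2 with hU
  set Y' : 𝒳 × (𝒳 → 𝒴) → 𝒴 := fun p => p.2 p.1 with hY'
  -- measure computations
  have hprodset : ∀ (x : 𝒳) (y : 𝒴),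
      πν {f : 𝒳 → 𝒴 | f x = y} = ν x {y} := by
    intro x y
    have : {f : 𝒳 → 𝒴 | f x = y} = Set.univ.pi (fun x' => if x' = x then {y} else Set.univ) := by
      ext f
      simp only [Set.mem_setOf_eq, Set.mem_pi, Set.mem_univ, forall_true_left]
      constructor
      · intro h x'
        by_cases hx : x' = x <;> simp [hx, h]
      · intro h
        have := h x
        simpa using this
    rw [this, hπν, Measure.pi_pi]
    rw [Fintype.prod_eq_single x]
    · simp
    · intro x' hx'; simp [hx', measure_univ]
  have hidq : ∀ (x : 𝒳) (y : 𝒴),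
      μ' ((fun p => (X' p, Y' p)) ⁻¹' {(x, y)}) = μ ((fun ω => (X ω, Y ω)) ⁻¹' {(x, y)}) := by
    intro x y
    have hset : (fun p => (X' p, Y' p)) ⁻¹' {(x, y)} = {x} ×ˢ {f : 𝒳 → 𝒴 | f x = y} := by
      ext ⟨a, f⟩
      simp only [Set.mem_preimage, Set.mem_singleton_iff, Prod.ext_iff, Set.mem_prod,
        Set.mem_setOf_eq, hX', hY']
      constructor
      · rintro ⟨h1, h2⟩; exact ⟨h1, h1 ▸ h2⟩
      · rintro ⟨h1, h2⟩; exact ⟨h1, h1 ▸ h2⟩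
    rw [hset, hμ', Measure.prod_prod, hprodset, hνkey]
  have hXmarg : ∀ x, μ' (X' ⁻¹' {x}) = pX {x} := by
    intro x
    have : X' ⁻¹' {x} = {x} ×ˢ (Set.univ : Set (𝒳 → 𝒴)) := by
      ext ⟨a, f⟩; simp [hX', eq_comm]
    rw [this, hμ', Measure.prod_prod, measure_univ, mul_one]
  have hUmarg : ∀ f, μ' (U ⁻¹' {f}) = πν {f} := by
    intro f
    have : U ⁻¹' {f} = (Set.univ : Set 𝒳) ×ˢ {f} := by
      ext ⟨a, g⟩; simp [hU, eq_comm]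
    rw [this, hμ', Measure.prod_prod, measure_univ, one_mul]
  have hind : ∀ (x : 𝒳) (f : 𝒳 → 𝒴),
      μ' ((fun p => (X' p, U p)) ⁻¹' {(x, f)}) = μ' (X' ⁻¹' {x}) * μ' (U ⁻¹' {f}) := by
    intro x f
    have : (fun p => (X' p, U p)) ⁻¹' {(x, f)} = {x} ×ˢ {f} := by
      ext ⟨a, g⟩; simp [hX', hU, Prod.ext_iff]
    rw [this, hμ', Measure.prod_prod, hXmarg, hUmarg]
  refine ⟨𝒳 × (𝒳 → 𝒴), inferInstance, μ', inferInstance, 𝒳 → 𝒴, inferInstance,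
    X', Y', U, fun _ => hmeas _, fun _ => hmeas _, fun _ => hmeas _, ?_, ?_, ?_⟩
  · exact fun ⟨x, y⟩ => (hidq x y).symm
  · rw [mi, ent_pair_indep μ' X' U (fun _ => hmeas _) (fun _ => hmeas _) hind]
    ring
  · rw [condEnt]
    have : (fun p => (Y' p, (X' p, U p)))
        = fun p => ((fun q : 𝒳 × (𝒳 → 𝒴) => (q.2 q.1, q)) ((fun p => (X' p, U p)) p)) := rfl
    rw [this, ent_comp_inj μ' (fun p => (X' p, U p)) (fun q : 𝒳 × (𝒳 → 𝒴) => (q.2 q.1, q))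
      (fun a b h => (Prod.ext_iff.1 h).2)]
    ring
end

section
/- Double Markov property: Let X, Y, Z be random variables on a common probability space taking values in finite sets, and suppose I(X;Z|Y) = 0 and I(Y;Z|X) = 0. Then there exists a random variable U on the same probability space, taking values in a finite set, such that H(U|X) = 0, H(U|Y) = 0, and I(X,Y;Z|U) = 0. -/
open MeasureTheory

set_option linter.unusedSectionVars false
set_option maxHeartbeats 1000000

section Marg

variable {ι : Type*} [Fintype ι]

/-- Marginal of a finite pmf `p` under a map `g`. -/
noncomputable def marg (p : ι → ℝ) {S : Type*} [DecidableEq S] (g : ι → S) (s : S) : ℝ :=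
  ∑ t ∈ Finset.univ.filter (fun t => g t = s), p t

variable {p : ι → ℝ} {S S' : Type*} [DecidableEq S] [DecidableEq S']

lemma marg_nonneg (hp : ∀ t, 0 ≤ p t) (g : ι → S) (s : S) : 0 ≤ marg p g s :=
  Finset.sum_nonneg fun t _ => hp t

lemma le_marg (hp : ∀ t, 0 ≤ p t) (g : ι → S) (t : ι) : p t ≤ marg p g (g t) :=
  Finset.single_le_sum (fun u _ => hp u) (by simp)

lemma marg_le (hp : ∀ t, 0 ≤ p t) {g1 : ι → S} {g2 : ι → S'} {s : S} {s' : S'}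
    (h : ∀ u, g1 u = s → g2 u = s') : marg p g1 s ≤ marg p g2 s' := by
  apply Finset.sum_le_sum_of_subset_of_nonneg
  · intro u hu
    simp only [Finset.mem_filter, Finset.mem_univ, true_and] at hu ⊢
    exact h u hu
  · exact fun u _ _ => hp u

lemma marg_congr {g1 : ι → S} {g2 : ι → S'} {s : S} {s' : S'}
    (h : ∀ u, g1 u = s ↔ g2 u = s') : marg p g1 s = marg p g2 s' := by
  unfold marg
  congr 1
  ext u
  simp [h u]

lemma marg_self [DecidableEq ι] (t : ι) : marg p id t = p t := by
  unfold marg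
  rw [show Finset.univ.filter (fun u => id u = t) = {t} by ext u; simp [eq_comm (a := u)],
    Finset.sum_singleton]

lemma marg_apply_inj [DecidableEq ι] {g : ι → S} (hg : Function.Injective g) (t : ι) :
    marg p g (g t) = p t := by
  rw [marg_congr (g2 := id) (s' := t) (fun u => by
    constructor
    · exact fun h => hg h
    · rintro rfl; rfl), marg_self]

lemma marg_total (g : ι → S) [Fintype S] : ∑ s, marg p g s = ∑ t, p t :=
  Finset.sum_fiberwise _ _ _

lemma marg_comp (g : ι → S) (h : S → S') [Fintype S] (s' : S') :
    marg p (fun t => h (g t)) s' = ∑ s ∈ Finset.univ.filter (fun s => h s = s'), marg p g s := by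
  unfold marg
  rw [Finset.sum_fiberwise_eq_sum_filter Finset.univ (Finset.univ.filter (fun s => h s = s')) g p]
  congr 1
  ext u
  simp

end Marg

section EntRep

variable {Ω : Type*} [MeasurableSpace Ω] (μ : Measure Ω) [IsProbabilityMeasure μ]
variable {ι : Type*} [Fintype ι]

/-- The pmf of a discrete random variable. -/
noncomputable def pm (W : Ω → ι) (t : ι) : ℝ := (μ (W ⁻¹' {t})).toReal

lemma pm_nonneg (W : Ω → ι) (t : ι) : 0 ≤ pm μ W t := ENNReal.toReal_nonneg

lemma meas_preimage (W : Ω → ι) (hW : DMeasurable W) {S : Type*} [DecidableEq S] (g : ι → S) (s : S) :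
    (μ ((fun ω => g (W ω)) ⁻¹' {s})).toReal = marg (pm μ W) g s := by
  have hset : (fun ω => g (W ω)) ⁻¹' {s}
      = ⋃ t ∈ Finset.univ.filter (fun t => g t = s), W ⁻¹' {t} := by
    ext ω
    simp only [Set.mem_preimage, Set.mem_singleton_iff, Set.mem_iUnion, Finset.mem_filter,
      Finset.mem_univ, true_and, exists_prop]
    constructor
    · intro h; exact ⟨W ω, h, rfl⟩
    · rintro ⟨t, ht, hWt⟩; rw [hWt]; exact ht
  rw [hset, measure_biUnion_finset ?hd (fun t _ => hW t), ENNReal.toReal_sum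
    (fun t _ => measure_ne_top μ _)]
  · rfl
  case hd =>
    intro t _ t' _ hne
    simp only [Function.onFun]
    rw [Set.disjoint_left]
    rintro ω (h1 : W ω = t) (h2 : W ω = t')
    exact hne (h1 ▸ h2)

lemma entRep (W : Ω → ι) (hW : DMeasurable W) {S : Type*} [Fintype S] [DecidableEq S] (g : ι → S) :
    ent μ (fun ω => g (W ω))
      = ∑ t, -(pm μ W t * Real.logb 2 (marg (pm μ W) g (g t))) := by
  unfold ent
  rw [tsum_fintype]
  calc ∑ s, -((μ ((fun ω => g (W ω)) ⁻¹' {s})).toReal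
          * Real.logb 2 (μ ((fun ω => g (W ω)) ⁻¹' {s})).toReal)
      = ∑ s, -(marg (pm μ W) g s * Real.logb 2 (marg (pm μ W) g s)) := by
        refine Finset.sum_congr rfl fun s _ => ?_
        rw [meas_preimage μ W hW g s]
    _ = ∑ s, ∑ t ∈ Finset.univ.filter (fun t => g t = s),
          -(pm μ W t * Real.logb 2 (marg (pm μ W) g (g t))) := by
        refine Finset.sum_congr rfl fun s _ => ?_
        rw [show marg (pm μ W) g s * Real.logb 2 (marg (pm μ W) g s)
            = ∑ t ∈ Finset.univ.filter (fun t => g t = s),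
              pm μ W t * Real.logb 2 (marg (pm μ W) g s) from by
          unfold marg; rw [Finset.sum_mul], ← Finset.sum_neg_distrib]
        refine Finset.sum_congr rfl fun t ht => ?_
        simp only [Finset.mem_filter, Finset.mem_univ, true_and] at ht
        rw [ht]
    _ = _ := Finset.sum_fiberwise _ _ _

end EntRep

section Gibbs

variable {ι : Type*} [Fintype ι]

lemma gibbs_eq (a b : ι → ℝ) (ha : ∀ t, 0 ≤ a t) (hb : ∀ t, 0 ≤ b t)
    (hab : ∀ t, 0 < a t → 0 < b t) (hsum : ∑ t, b t ≤ ∑ t, a t)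
    (h : ∑ t, a t * Real.log (b t / a t) = 0) : ∀ t, b t = a t := by
  have hpt : ∀ t, a t * Real.log (b t / a t) ≤ b t - a t := by
    intro t
    rcases eq_or_lt_of_le (ha t) with h0 | h0
    · rw [← h0]; simpa using hb t
    · have hbt := hab t h0
      have hd : 0 < b t / a t := div_pos hbt h0
      calc a t * Real.log (b t / a t) ≤ a t * (b t / a t - 1) :=
            mul_le_mul_of_nonneg_left (Real.log_le_sub_one_of_pos hd) (le_of_lt h0)
        _ = b t - a t := by field_simp
  have hsum2 : ∑ t, (b t - a t) ≤ 0 := by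
    rw [Finset.sum_sub_distrib]; linarith
  have hle : ∑ t, a t * Real.log (b t / a t) ≤ ∑ t, (b t - a t) :=
    Finset.sum_le_sum (fun t _ => hpt t)
  have hsums : ∑ t, a t * Real.log (b t / a t) = ∑ t, (b t - a t) := by linarith
  have heq : ∀ t ∈ Finset.univ, a t * Real.log (b t / a t) = b t - a t :=
    (Finset.sum_eq_sum_iff_of_le (fun t _ => hpt t)).1 hsums
  intro t
  have he := heq t (Finset.mem_univ t)
  rcases eq_or_lt_of_le (ha t) with h0 | h0
  · rw [← h0] at he ⊢; simpa using he.symm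
  · have hbt := hab t h0
    by_contra hne
    have hd : 0 < b t / a t := div_pos hbt h0
    have hne1 : b t / a t ≠ 1 := by
      intro h1
      rw [div_eq_one_iff_eq (ne_of_gt h0)] at h1
      exact hne h1
    have hstrict : a t * Real.log (b t / a t) < b t - a t := by
      calc a t * Real.log (b t / a t) < a t * (b t / a t - 1) :=
            mul_lt_mul_of_pos_left (Real.log_lt_sub_one_of_pos hd hne1) h0
        _ = b t - a t := by field_simp
    linarith

end Gibbs

section SumHelpers

lemma sum_filter_snd {A B : Type*} [Fintype A] [Fintype B] [DecidableEq B] (F : A × B → ℝ) (y : B) :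
    ∑ s ∈ Finset.univ.filter (fun s : A × B => s.2 = y), F s = ∑ x, F (x, y) := by
  rw [Finset.sum_filter, Fintype.sum_prod_type]
  simp

end SumHelpers

section CmiKey

variable {Ω : Type*} [MeasurableSpace Ω] (μ : Measure Ω) [IsProbabilityMeasure μ]
variable {𝒳 𝒴 𝒵 : Type*} [Fintype 𝒳] [Fintype 𝒴] [Fintype 𝒵]
variable [DecidableEq 𝒳] [DecidableEq 𝒴] [DecidableEq 𝒵]

lemma preim_pair_meas (X : Ω → 𝒳) (Y : Ω → 𝒴) (Z : Ω → 𝒵) (hX : DMeasurable X)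
    (hY : DMeasurable Y) (hZ : DMeasurable Z) :
    DMeasurable (fun ω => (X ω, Y ω, Z ω)) := by
  intro t
  have hset : (fun ω => (X ω, Y ω, Z ω)) ⁻¹' {t}
      = X ⁻¹' {t.1} ∩ Y ⁻¹' {t.2.1} ∩ Z ⁻¹' {t.2.2} := by
    ext ω; simp [Prod.ext_iff, and_assoc]
  rw [hset]; exact ((hX _).inter (hY _)).inter (hZ _)

lemma cmi_key (X : Ω → 𝒳) (Y : Ω → 𝒴) (Z : Ω → 𝒵)
    (hX : DMeasurable X) (hY : DMeasurable Y) (hZ : DMeasurable Z)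
    (h : cmi μ X Z Y = 0) :
    ∀ (x : 𝒳) (y : 𝒴) (z : 𝒵),
      (μ (X ⁻¹' {x} ∩ Y ⁻¹' {y} ∩ Z ⁻¹' {z})).toReal * (μ (Y ⁻¹' {y})).toReal
        = (μ (X ⁻¹' {x} ∩ Y ⁻¹' {y})).toReal * (μ (Z ⁻¹' {z} ∩ Y ⁻¹' {y})).toReal := by
  have hW : DMeasurable (fun ω => (X ω, Y ω, Z ω)) := preim_pair_meas X Y Z hX hY hZ
  set W : Ω → 𝒳 × 𝒴 × 𝒵 := fun ω => (X ω, Y ω, Z ω) with hWdef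
  set p : 𝒳 × 𝒴 × 𝒵 → ℝ := pm μ W with hpdef
  have hp : ∀ t, 0 ≤ p t := fun t => pm_nonneg μ W t
  have hle_XY_Y : ∀ (x : 𝒳) (y : 𝒴),
      marg p (fun u : 𝒳 × 𝒴 × 𝒵 => (u.1, u.2.1)) (x, y)
        ≤ marg p (fun u : 𝒳 × 𝒴 × 𝒵 => u.2.1) y :=
    fun x y => marg_le hp (fun u hu => by
      simp only [Prod.ext_iff] at hu; exact hu.2)
  have hsumX : ∀ y : 𝒴, ∑ x, marg p (fun u : 𝒳 × 𝒴 × 𝒵 => (u.1, u.2.1)) (x, y)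
      = marg p (fun u : 𝒳 × 𝒴 × 𝒵 => u.2.1) y := by
    intro y
    rw [show marg p (fun u : 𝒳 × 𝒴 × 𝒵 => u.2.1) y
        = ∑ s ∈ Finset.univ.filter (fun s : 𝒳 × 𝒴 => s.2 = y),
            marg p (fun u : 𝒳 × 𝒴 × 𝒵 => (u.1, u.2.1)) s from
      marg_comp (fun u : 𝒳 × 𝒴 × 𝒵 => (u.1, u.2.1)) Prod.snd y]
    rw [sum_filter_snd]
  have hsumZ : ∀ y : 𝒴, ∑ z, marg p (fun u : 𝒳 × 𝒴 × 𝒵 => (u.2.2, u.2.1)) (z, y)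
      = marg p (fun u : 𝒳 × 𝒴 × 𝒵 => u.2.1) y := by
    intro y
    rw [show marg p (fun u : 𝒳 × 𝒴 × 𝒵 => u.2.1) y
        = ∑ s ∈ Finset.univ.filter (fun s : 𝒵 × 𝒴 => s.2 = y),
            marg p (fun u : 𝒳 × 𝒴 × 𝒵 => (u.2.2, u.2.1)) s from
      marg_comp (fun u : 𝒳 × 𝒴 × 𝒵 => (u.2.2, u.2.1)) Prod.snd y]
    rw [sum_filter_snd]
  set b : 𝒳 × 𝒴 × 𝒵 → ℝ := fun t =>
    if marg p (fun u : 𝒳 × 𝒴 × 𝒵 => u.2.1) t.2.1 = 0 then 0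
    else marg p (fun u : 𝒳 × 𝒴 × 𝒵 => (u.1, u.2.1)) (t.1, t.2.1)
      * marg p (fun u : 𝒳 × 𝒴 × 𝒵 => (u.2.2, u.2.1)) (t.2.2, t.2.1)
      / marg p (fun u : 𝒳 × 𝒴 × 𝒵 => u.2.1) t.2.1 with hbdef
  have hbnn : ∀ t, 0 ≤ b t := by
    intro t
    rw [hbdef]
    dsimp only
    split
    · exact le_refl 0
    · exact div_nonneg (mul_nonneg (marg_nonneg hp _ _) (marg_nonneg hp _ _))
        (marg_nonneg hp _ _)
  have hab : ∀ t, 0 < p t → 0 < b t := by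
    intro t hpt
    have h1 : p t ≤ marg p (fun u : 𝒳 × 𝒴 × 𝒵 => (u.1, u.2.1)) (t.1, t.2.1) :=
      le_marg hp (fun u : 𝒳 × 𝒴 × 𝒵 => (u.1, u.2.1)) t
    have h2 : p t ≤ marg p (fun u : 𝒳 × 𝒴 × 𝒵 => (u.2.2, u.2.1)) (t.2.2, t.2.1) :=
      le_marg hp (fun u : 𝒳 × 𝒴 × 𝒵 => (u.2.2, u.2.1)) t
    have h3 : p t ≤ marg p (fun u : 𝒳 × 𝒴 × 𝒵 => u.2.1) t.2.1 :=
      le_marg hp (fun u : 𝒳 × 𝒴 × 𝒵 => u.2.1) t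
    rw [hbdef]
    dsimp only
    rw [if_neg (by linarith)]
    exact div_pos (mul_pos (lt_of_lt_of_le hpt h1) (lt_of_lt_of_le hpt h2))
      (lt_of_lt_of_le hpt h3)
  have hbsum : ∑ t, b t = ∑ t, p t := by
    rw [← marg_total (p := p) (fun u : 𝒳 × 𝒴 × 𝒵 => u.2.1)]
    rw [Fintype.sum_prod_type, Finset.sum_comm, Fintype.sum_prod_type]
    refine Finset.sum_congr rfl fun y _ => ?_
    by_cases hy : marg p (fun u : 𝒳 × 𝒴 × 𝒵 => u.2.1) y = 0
    · rw [hy]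
      rw [Finset.sum_eq_zero]
      intro z _
      rw [Finset.sum_eq_zero]
      intro x _
      rw [hbdef]
      dsimp only
      rw [if_pos hy]
    · have hterm : ∀ (z : 𝒵) (x : 𝒳), b (x, (y, z))
          = marg p (fun u : 𝒳 × 𝒴 × 𝒵 => (u.1, u.2.1)) (x, y)
            * marg p (fun u : 𝒳 × 𝒴 × 𝒵 => (u.2.2, u.2.1)) (z, y)
            / marg p (fun u : 𝒳 × 𝒴 × 𝒵 => u.2.1) y := by
        intro z x
        rw [hbdef]
        dsimp only
        rw [if_neg hy]
      calc ∑ z, ∑ x, b (x, (y, z))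
          = ∑ z, ((∑ x, marg p (fun u : 𝒳 × 𝒴 × 𝒵 => (u.1, u.2.1)) (x, y))
              * marg p (fun u : 𝒳 × 𝒴 × 𝒵 => (u.2.2, u.2.1)) (z, y)
              / marg p (fun u : 𝒳 × 𝒴 × 𝒵 => u.2.1) y) := by
            refine Finset.sum_congr rfl fun z _ => ?_
            rw [Finset.sum_mul, Finset.sum_div]
            exact Finset.sum_congr rfl fun x _ => hterm z x
        _ = ∑ z, marg p (fun u : 𝒳 × 𝒴 × 𝒵 => (u.2.2, u.2.1)) (z, y) := by
            refine Finset.sum_congr rfl fun z _ => ?_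
            rw [hsumX y, mul_comm, mul_div_assoc, div_self hy, mul_one]
        _ = marg p (fun u : 𝒳 × 𝒴 × 𝒵 => u.2.1) y := hsumZ y
  -- representation of the cmi as a sum
  have hinj3 : Function.Injective (fun u : 𝒳 × 𝒴 × 𝒵 => (u.1, u.2.2, u.2.1)) := by
    intro u v huv
    simp only [Prod.ext_iff] at huv
    exact Prod.ext huv.1 (Prod.ext huv.2.2 huv.2.1)
  have e1 : ent μ (fun ω => (X ω, Y ω)) = ∑ t : 𝒳 × 𝒴 × 𝒵,
      -(p t * Real.logb 2 (marg p (fun u : 𝒳 × 𝒴 × 𝒵 => (u.1, u.2.1)) (t.1, t.2.1))) :=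
    entRep μ W hW (fun u : 𝒳 × 𝒴 × 𝒵 => (u.1, u.2.1))
  have e2 : ent μ (fun ω => (Z ω, Y ω)) = ∑ t : 𝒳 × 𝒴 × 𝒵,
      -(p t * Real.logb 2 (marg p (fun u : 𝒳 × 𝒴 × 𝒵 => (u.2.2, u.2.1)) (t.2.2, t.2.1))) :=
    entRep μ W hW (fun u : 𝒳 × 𝒴 × 𝒵 => (u.2.2, u.2.1))
  have e3 : ent μ (fun ω => (X ω, Z ω, Y ω)) = ∑ t : 𝒳 × 𝒴 × 𝒵,
      -(p t * Real.logb 2 (p t)) := by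
    rw [show ent μ (fun ω => (X ω, Z ω, Y ω)) = ∑ t : 𝒳 × 𝒴 × 𝒵,
        -(p t * Real.logb 2 (marg p (fun u : 𝒳 × 𝒴 × 𝒵 => (u.1, u.2.2, u.2.1))
          ((fun u : 𝒳 × 𝒴 × 𝒵 => (u.1, u.2.2, u.2.1)) t))) from
      entRep μ W hW (fun u : 𝒳 × 𝒴 × 𝒵 => (u.1, u.2.2, u.2.1))]
    refine Finset.sum_congr rfl fun t _ => ?_
    rw [marg_apply_inj hinj3]
  have e4 : ent μ Y = ∑ t : 𝒳 × 𝒴 × 𝒵,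
      -(p t * Real.logb 2 (marg p (fun u : 𝒳 × 𝒴 × 𝒵 => u.2.1) t.2.1)) :=
    entRep μ W hW (fun u : 𝒳 × 𝒴 × 𝒵 => u.2.1)
  have hcmi : ∑ t : 𝒳 × 𝒴 × 𝒵,
      (-(p t * Real.logb 2 (marg p (fun u : 𝒳 × 𝒴 × 𝒵 => (u.1, u.2.1)) (t.1, t.2.1)))
        + -(p t * Real.logb 2 (marg p (fun u : 𝒳 × 𝒴 × 𝒵 => (u.2.2, u.2.1)) (t.2.2, t.2.1)))
        - -(p t * Real.logb 2 (p t))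
        - -(p t * Real.logb 2 (marg p (fun u : 𝒳 × 𝒴 × 𝒵 => u.2.1) t.2.1))) = 0 := by
    have := h
    unfold cmi at this
    rw [e1, e2, e3, e4] at this
    rw [Finset.sum_sub_distrib, Finset.sum_sub_distrib, Finset.sum_add_distrib]
    exact this
  have hlog2 : Real.log 2 ≠ 0 := ne_of_gt (Real.log_pos one_lt_two)
  have hgibbs0 : ∑ t, p t * Real.log (b t / p t) = 0 := by
    have hptwise : ∀ t : 𝒳 × 𝒴 × 𝒵, p t * Real.log (b t / p t)
        = -Real.log 2 *
          (-(p t * Real.logb 2 (marg p (fun u : 𝒳 × 𝒴 × 𝒵 => (u.1, u.2.1)) (t.1, t.2.1)))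
            + -(p t * Real.logb 2 (marg p (fun u : 𝒳 × 𝒴 × 𝒵 => (u.2.2, u.2.1)) (t.2.2, t.2.1)))
            - -(p t * Real.logb 2 (p t))
            - -(p t * Real.logb 2 (marg p (fun u : 𝒳 × 𝒴 × 𝒵 => u.2.1) t.2.1))) := by
      intro t
      rcases eq_or_lt_of_le (hp t) with h0 | h0
      · rw [← h0]; ring
      · have h1 : 0 < marg p (fun u : 𝒳 × 𝒴 × 𝒵 => (u.1, u.2.1)) (t.1, t.2.1) :=
          lt_of_lt_of_le h0 (le_marg hp _ t)
        have h2 : 0 < marg p (fun u : 𝒳 × 𝒴 × 𝒵 => (u.2.2, u.2.1)) (t.2.2, t.2.1) :=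
          lt_of_lt_of_le h0 (le_marg hp _ t)
        have h3 : 0 < marg p (fun u : 𝒳 × 𝒴 × 𝒵 => u.2.1) t.2.1 :=
          lt_of_lt_of_le h0 (le_marg hp _ t)
        have hb : b t = marg p (fun u : 𝒳 × 𝒴 × 𝒵 => (u.1, u.2.1)) (t.1, t.2.1)
            * marg p (fun u : 𝒳 × 𝒴 × 𝒵 => (u.2.2, u.2.1)) (t.2.2, t.2.1)
            / marg p (fun u : 𝒳 × 𝒴 × 𝒵 => u.2.1) t.2.1 := by
          rw [hbdef]; dsimp only; rw [if_neg (ne_of_gt h3)]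
        rw [hb]
        rw [Real.log_div (by positivity) (ne_of_gt h0),
          Real.log_div (by positivity) (ne_of_gt h3),
          Real.log_mul (ne_of_gt h1) (ne_of_gt h2)]
        simp only [Real.logb, ← Real.log_div_log]
        field_simp
        ring
    rw [Finset.sum_congr rfl (fun t _ => hptwise t), ← Finset.mul_sum, hcmi, mul_zero]
  have hba : ∀ t, b t = p t :=
    gibbs_eq p b hp hbnn hab (le_of_eq hbsum) hgibbs0
  -- translate to measures
  have hmXY : ∀ (x : 𝒳) (y : 𝒴), marg p (fun u : 𝒳 × 𝒴 × 𝒵 => (u.1, u.2.1)) (x, y)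
      = (μ (X ⁻¹' {x} ∩ Y ⁻¹' {y})).toReal := by
    intro x y
    rw [← meas_preimage μ W hW (fun u : 𝒳 × 𝒴 × 𝒵 => (u.1, u.2.1)) (x, y)]
    congr 2
    ext ω
    simp [hWdef, Prod.ext_iff]
  have hmZY : ∀ (z : 𝒵) (y : 𝒴), marg p (fun u : 𝒳 × 𝒴 × 𝒵 => (u.2.2, u.2.1)) (z, y)
      = (μ (Z ⁻¹' {z} ∩ Y ⁻¹' {y})).toReal := by
    intro z y
    rw [← meas_preimage μ W hW (fun u : 𝒳 × 𝒴 × 𝒵 => (u.2.2, u.2.1)) (z, y)]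
    congr 2
    ext ω
    simp [hWdef, Prod.ext_iff]
  have hmY : ∀ y : 𝒴, marg p (fun u : 𝒳 × 𝒴 × 𝒵 => u.2.1) y = (μ (Y ⁻¹' {y})).toReal := by
    intro y
    exact (meas_preimage μ W hW (fun u : 𝒳 × 𝒴 × 𝒵 => u.2.1) y).symm
  have hmP : ∀ (x : 𝒳) (y : 𝒴) (z : 𝒵),
      p (x, y, z) = (μ (X ⁻¹' {x} ∩ Y ⁻¹' {y} ∩ Z ⁻¹' {z})).toReal := by
    intro x y z
    rw [hpdef]
    unfold pm
    congr 2
    ext ω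
    simp [hWdef, Prod.ext_iff, and_assoc]
  intro x y z
  rw [← hmP, ← hmXY, ← hmZY, ← hmY]
  have hbt := hba (x, y, z)
  by_cases hy : marg p (fun u : 𝒳 × 𝒴 × 𝒵 => u.2.1) y = 0
  · have hP0 : p (x, y, z) = 0 :=
      le_antisymm (le_of_le_of_eq (le_marg hp (fun u : 𝒳 × 𝒴 × 𝒵 => u.2.1) (x, y, z)) hy)
        (hp _)
    have hXY0 : marg p (fun u : 𝒳 × 𝒴 × 𝒵 => (u.1, u.2.1)) (x, y) = 0 :=
      le_antisymm (le_of_le_of_eq (hle_XY_Y x y) hy) (marg_nonneg hp _ _)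
    rw [hP0, hXY0, zero_mul, zero_mul]
  · rw [hbdef] at hbt
    dsimp only at hbt
    rw [if_neg hy] at hbt
    rw [div_eq_iff hy] at hbt
    exact hbt.symm

end CmiKey

section Helpers2

lemma sum_filter_pair {A B U : Type*} [Fintype A] [Fintype B] [DecidableEq B] [DecidableEq U]
    (h : A → U) (F : A × B → ℝ)
    (z : B) (u : U) :
    ∑ s ∈ Finset.univ.filter (fun s : A × B => (s.2, h s.1) = (z, u)), F s
      = ∑ a ∈ Finset.univ.filter (fun a => h a = u), F (a, z) := by
  rw [Finset.sum_filter, Finset.sum_filter, Fintype.sum_prod_type]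
  refine Finset.sum_congr rfl fun a _ => ?_
  by_cases hau : h a = u
  · simp [hau, Prod.ext_iff]
  · simp [hau, Prod.ext_iff]

end Helpers2

/-- Double Markov property: if `X ⫫ Z | Y` and `Y ⫫ Z | X` then there is a random
variable `U` on the same space with `H(U|X) = H(U|Y) = 0` and `(X,Y) ⫫ Z | U`. -/
theorem double_markov {Ω 𝒳 𝒴 𝒵 : Type} [MeasurableSpace Ω] (μ : Measure Ω)
    [IsProbabilityMeasure μ] [Fintype 𝒳] [Fintype 𝒴] [Fintype 𝒵]
    (X : Ω → 𝒳) (Y : Ω → 𝒴) (Z : Ω → 𝒵)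
    (hX : DMeasurable X) (hY : DMeasurable Y) (hZ : DMeasurable Z)
    (h1 : cmi μ X Z Y = 0) (h2 : cmi μ Y Z X = 0) :
    ∃ (𝒰 : Type) (_ : Fintype 𝒰) (U : Ω → 𝒰), DMeasurable U ∧
      condEnt μ U X = 0 ∧ condEnt μ U Y = 0 ∧
      cmi μ (fun ω => (X ω, Y ω)) Z U = 0 := by
  letI : DecidableEq 𝒳 := Classical.decEq _
  letI : DecidableEq 𝒴 := Classical.decEq _
  letI : DecidableEq 𝒵 := Classical.decEq _
  have hW : DMeasurable (fun ω => (X ω, Y ω, Z ω)) := preim_pair_meas X Y Z hX hY hZ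
  set W : Ω → 𝒳 × 𝒴 × 𝒵 := fun ω => (X ω, Y ω, Z ω) with hWdef
  set p : 𝒳 × 𝒴 × 𝒵 → ℝ := pm μ W with hpdef
  have hp : ∀ t, 0 ≤ p t := fun t => pm_nonneg μ W t
  -- conversions between marginals and measures
  have hmX : ∀ x : 𝒳, marg p (fun u : 𝒳 × 𝒴 × 𝒵 => u.1) x = (μ (X ⁻¹' {x})).toReal :=
    fun x => (meas_preimage μ W hW (fun u : 𝒳 × 𝒴 × 𝒵 => u.1) x).symm
  have hmY : ∀ y : 𝒴, marg p (fun u : 𝒳 × 𝒴 × 𝒵 => u.2.1) y = (μ (Y ⁻¹' {y})).toReal :=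
    fun y => (meas_preimage μ W hW (fun u : 𝒳 × 𝒴 × 𝒵 => u.2.1) y).symm
  have hmXY : ∀ (x : 𝒳) (y : 𝒴), marg p (fun u : 𝒳 × 𝒴 × 𝒵 => (u.1, u.2.1)) (x, y)
      = (μ (X ⁻¹' {x} ∩ Y ⁻¹' {y})).toReal := by
    intro x y
    rw [← meas_preimage μ W hW (fun u : 𝒳 × 𝒴 × 𝒵 => (u.1, u.2.1)) (x, y)]
    congr 2
    ext ω
    simp [hWdef, Prod.ext_iff]
  have hmXZ : ∀ (x : 𝒳) (z : 𝒵), marg p (fun u : 𝒳 × 𝒴 × 𝒵 => (u.1, u.2.2)) (x, z)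
      = (μ (X ⁻¹' {x} ∩ Z ⁻¹' {z})).toReal := by
    intro x z
    rw [← meas_preimage μ W hW (fun u : 𝒳 × 𝒴 × 𝒵 => (u.1, u.2.2)) (x, z)]
    congr 2
    ext ω
    simp [hWdef, Prod.ext_iff]
  have hmZY : ∀ (z : 𝒵) (y : 𝒴), marg p (fun u : 𝒳 × 𝒴 × 𝒵 => (u.2.2, u.2.1)) (z, y)
      = (μ (Z ⁻¹' {z} ∩ Y ⁻¹' {y})).toReal := by
    intro z y
    rw [← meas_preimage μ W hW (fun u : 𝒳 × 𝒴 × 𝒵 => (u.2.2, u.2.1)) (z, y)]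
    congr 2
    ext ω
    simp [hWdef, Prod.ext_iff]
  have hmP : ∀ t : 𝒳 × 𝒴 × 𝒵,
      p t = (μ (X ⁻¹' {t.1} ∩ Y ⁻¹' {t.2.1} ∩ Z ⁻¹' {t.2.2})).toReal := by
    intro t
    rw [hpdef]
    unfold pm
    congr 2
    ext ω
    simp [hWdef, Prod.ext_iff, and_assoc]
  -- the two conditional independence factorizations
  have key1 : ∀ t : 𝒳 × 𝒴 × 𝒵,
      p t * marg p (fun u : 𝒳 × 𝒴 × 𝒵 => u.2.1) t.2.1
        = marg p (fun u : 𝒳 × 𝒴 × 𝒵 => (u.1, u.2.1)) (t.1, t.2.1)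
          * marg p (fun u : 𝒳 × 𝒴 × 𝒵 => (u.2.2, u.2.1)) (t.2.2, t.2.1) := by
    intro t
    rw [hmP, hmY, hmXY, hmZY]
    exact cmi_key μ X Y Z hX hY hZ h1 t.1 t.2.1 t.2.2
  have key2 : ∀ t : 𝒳 × 𝒴 × 𝒵,
      p t * marg p (fun u : 𝒳 × 𝒴 × 𝒵 => u.1) t.1
        = marg p (fun u : 𝒳 × 𝒴 × 𝒵 => (u.1, u.2.1)) (t.1, t.2.1)
          * marg p (fun u : 𝒳 × 𝒴 × 𝒵 => (u.1, u.2.2)) (t.1, t.2.2) := by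
    intro t
    have hk := cmi_key μ Y X Z hY hX hZ h2 t.2.1 t.1 t.2.2
    rw [hmP, hmX, hmXY, hmXZ]
    rw [show X ⁻¹' {t.1} ∩ Y ⁻¹' {t.2.1} ∩ Z ⁻¹' {t.2.2}
        = Y ⁻¹' {t.2.1} ∩ X ⁻¹' {t.1} ∩ Z ⁻¹' {t.2.2} from by
      rw [Set.inter_comm (X ⁻¹' {t.1})]]
    rw [show X ⁻¹' {t.1} ∩ Y ⁻¹' {t.2.1} = Y ⁻¹' {t.2.1} ∩ X ⁻¹' {t.1} from
      Set.inter_comm _ _]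
    rw [show X ⁻¹' {t.1} ∩ Z ⁻¹' {t.2.2} = Z ⁻¹' {t.2.2} ∩ X ⁻¹' {t.1} from
      Set.inter_comm _ _]
    exact hk
  -- the connectedness relation on 𝒳
  set r : 𝒳 → 𝒳 → Prop := fun x x' => ∃ y : 𝒴,
    0 < marg p (fun u : 𝒳 × 𝒴 × 𝒵 => (u.1, u.2.1)) (x, y)
      ∧ 0 < marg p (fun u : 𝒳 × 𝒴 × 𝒵 => (u.1, u.2.1)) (x', y) with hrdef
  letI : ∀ x : 𝒳, DecidablePred (Relation.EqvGen r x) :=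
    fun _ _ => Classical.propDecidable _
  set f : 𝒳 → Finset 𝒳 := fun x => Finset.univ.filter (fun x' => Relation.EqvGen r x x')
    with hfdef
  have hf_mem : ∀ x x' : 𝒳, x' ∈ f x ↔ Relation.EqvGen r x x' := by
    intro x x'
    rw [hfdef]
    simp
  have hf_of_eqv : ∀ x x' : 𝒳, Relation.EqvGen r x x' → f x = f x' := by
    intro x x' hxx'
    ext u
    rw [hf_mem, hf_mem]
    constructor
    · intro h
      exact Relation.EqvGen.trans _ _ _ (Relation.EqvGen.symm _ _ hxx') h
    · intro h
      exact Relation.EqvGen.trans _ _ _ hxx' h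
  have heqv_of_f : ∀ x x' : 𝒳, f x = f x' → Relation.EqvGen r x x' := by
    intro x x' hff
    have : x' ∈ f x' := (hf_mem x' x').2 (Relation.EqvGen.refl x')
    rw [← hff, hf_mem] at this
    exact this
  -- chain invariance of the conditional distribution of Z given X
  have hchain : ∀ x x' : 𝒳, Relation.EqvGen r x x' → x = x'
      ∨ (0 < marg p (fun u : 𝒳 × 𝒴 × 𝒵 => u.1) x
        ∧ 0 < marg p (fun u : 𝒳 × 𝒴 × 𝒵 => u.1) x'
        ∧ ∀ z : 𝒵, marg p (fun u : 𝒳 × 𝒴 × 𝒵 => (u.1, u.2.2)) (x, z)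
            * marg p (fun u : 𝒳 × 𝒴 × 𝒵 => u.1) x'
          = marg p (fun u : 𝒳 × 𝒴 × 𝒵 => (u.1, u.2.2)) (x', z)
            * marg p (fun u : 𝒳 × 𝒴 × 𝒵 => u.1) x) := by
    intro x x' hxx'
    induction hxx' with
    | rel a b hab =>
      right
      rw [hrdef] at hab
      obtain ⟨y, hay, hby⟩ := hab
      have hmXa : 0 < marg p (fun u : 𝒳 × 𝒴 × 𝒵 => u.1) a :=
        lt_of_lt_of_le hay (marg_le hp (fun u hu => by
          simp only [Prod.ext_iff] at hu; exact hu.1))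
      have hmXb : 0 < marg p (fun u : 𝒳 × 𝒴 × 𝒵 => u.1) b :=
        lt_of_lt_of_le hby (marg_le hp (fun u hu => by
          simp only [Prod.ext_iff] at hu; exact hu.1))
      have hmYy : 0 < marg p (fun u : 𝒳 × 𝒴 × 𝒵 => u.2.1) y :=
        lt_of_lt_of_le hay (marg_le hp (fun u hu => by
          simp only [Prod.ext_iff] at hu; exact hu.2))
      refine ⟨hmXa, hmXb, fun z => ?_⟩
      -- auxiliary: for any c with mXY(c,y)>0 :  mXZ(c,z)*mY y = mX c * mZY(z,y)
      have haux : ∀ c : 𝒳, 0 < marg p (fun u : 𝒳 × 𝒴 × 𝒵 => (u.1, u.2.1)) (c, y) →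
          marg p (fun u : 𝒳 × 𝒴 × 𝒵 => (u.1, u.2.2)) (c, z)
            * marg p (fun u : 𝒳 × 𝒴 × 𝒵 => u.2.1) y
          = marg p (fun u : 𝒳 × 𝒴 × 𝒵 => u.1) c
            * marg p (fun u : 𝒳 × 𝒴 × 𝒵 => (u.2.2, u.2.1)) (z, y) := by
        intro c hcy
        have k1 := key1 (c, y, z)
        have k2 := key2 (c, y, z)
        simp only at k1 k2
        refine mul_left_cancel₀ (ne_of_gt hcy) ?_
        linear_combination marg p (fun u : 𝒳 × 𝒴 × 𝒵 => u.1) c * k1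
          - marg p (fun u : 𝒳 × 𝒴 × 𝒵 => u.2.1) y * k2
      have ha := haux a hay
      have hb := haux b hby
      refine mul_right_cancel₀ (ne_of_gt hmYy) ?_
      linear_combination marg p (fun u : 𝒳 × 𝒴 × 𝒵 => u.1) b * ha
        - marg p (fun u : 𝒳 × 𝒴 × 𝒵 => u.1) a * hb
    | refl a => exact Or.inl rfl
    | symm a b _ ih =>
      rcases ih with rfl | ⟨ha, hb, hq⟩
      · exact Or.inl rfl
      · exact Or.inr ⟨hb, ha, fun z => (hq z).symm⟩
    | trans a b c _ _ ih1 ih2 =>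
      rcases ih1 with rfl | ⟨ha, hb, hq1⟩
      · exact ih2
      · rcases ih2 with rfl | ⟨hb', hc, hq2⟩
        · exact Or.inr ⟨ha, hb, hq1⟩
        · refine Or.inr ⟨ha, hc, fun z => ?_⟩
          refine mul_right_cancel₀ (ne_of_gt hb) ?_
          linear_combination marg p (fun u : 𝒳 × 𝒴 × 𝒵 => u.1) c * hq1 z
            + marg p (fun u : 𝒳 × 𝒴 × 𝒵 => u.1) a * hq2 z
  -- the common information random variable
  refine ⟨Finset 𝒳, inferInstance, fun ω => f (X ω), ?_, ?_, ?_, ?_⟩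
  · -- measurability
    intro s
    have hset : (fun ω => f (X ω)) ⁻¹' {s} = ⋃ x ∈ {x : 𝒳 | f x = s}, X ⁻¹' {x} := by
      ext ω
      simp only [Set.mem_preimage, Set.mem_singleton_iff, Set.mem_iUnion, Set.mem_setOf_eq]
      constructor
      · intro h; exact ⟨X ω, h, rfl⟩
      · rintro ⟨x, hx, hXx⟩; rw [hXx]; exact hx
    rw [hset]
    exact MeasurableSet.biUnion (Set.to_countable _) (fun x _ => hX x)
  · -- condEnt U X = 0
    unfold condEnt
    rw [show ent μ (fun ω => (f (X ω), X ω)) = ∑ t : 𝒳 × 𝒴 × 𝒵,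
        -(p t * Real.logb 2 (marg p (fun u : 𝒳 × 𝒴 × 𝒵 => (f u.1, u.1)) (f t.1, t.1))) from
      entRep μ W hW (fun u : 𝒳 × 𝒴 × 𝒵 => (f u.1, u.1))]
    rw [show ent μ X = ∑ t : 𝒳 × 𝒴 × 𝒵,
        -(p t * Real.logb 2 (marg p (fun u : 𝒳 × 𝒴 × 𝒵 => u.1) t.1)) from
      entRep μ W hW (fun u : 𝒳 × 𝒴 × 𝒵 => u.1)]
    rw [sub_eq_zero]
    refine Finset.sum_congr rfl fun t _ => ?_
    rw [marg_congr (g2 := fun u : 𝒳 × 𝒴 × 𝒵 => u.1) (s' := t.1) (fun u => by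
      simp only [Prod.ext_iff]
      constructor
      · exact fun h => h.2
      · exact fun h => ⟨by rw [h], h⟩)]
  · -- condEnt U Y = 0
    unfold condEnt
    rw [show ent μ (fun ω => (f (X ω), Y ω)) = ∑ t : 𝒳 × 𝒴 × 𝒵,
        -(p t * Real.logb 2 (marg p (fun u : 𝒳 × 𝒴 × 𝒵 => (f u.1, u.2.1)) (f t.1, t.2.1))) from
      entRep μ W hW (fun u : 𝒳 × 𝒴 × 𝒵 => (f u.1, u.2.1))]
    rw [show ent μ Y = ∑ t : 𝒳 × 𝒴 × 𝒵,
        -(p t * Real.logb 2 (marg p (fun u : 𝒳 × 𝒴 × 𝒵 => u.2.1) t.2.1)) from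
      entRep μ W hW (fun u : 𝒳 × 𝒴 × 𝒵 => u.2.1)]
    rw [sub_eq_zero]
    refine Finset.sum_congr rfl fun t _ => ?_
    rcases eq_or_lt_of_le (hp t) with h0 | h0
    · rw [← h0]; ring
    · have hmarg : marg p (fun u : 𝒳 × 𝒴 × 𝒵 => (f u.1, u.2.1)) (f t.1, t.2.1)
          = marg p (fun u : 𝒳 × 𝒴 × 𝒵 => u.2.1) t.2.1 := by
        unfold marg
        refine Finset.sum_subset ?_ ?_
        · intro u hu
          simp only [Finset.mem_filter, Finset.mem_univ, true_and, Prod.ext_iff] at hu ⊢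
          exact hu.2
        · intro u hu hnotin
          simp only [Finset.mem_filter, Finset.mem_univ, true_and, Prod.ext_iff] at hu hnotin
          by_contra hpu
          have hpu' : 0 < p u := lt_of_le_of_ne (hp u) (Ne.symm hpu)
          have h1u : 0 < marg p (fun v : 𝒳 × 𝒴 × 𝒵 => (v.1, v.2.1)) (u.1, t.2.1) := by
            rw [← hu]
            exact lt_of_lt_of_le hpu' (le_marg hp (fun v : 𝒳 × 𝒴 × 𝒵 => (v.1, v.2.1)) u)
          have h1t : 0 < marg p (fun v : 𝒳 × 𝒴 × 𝒵 => (v.1, v.2.1)) (t.1, t.2.1) :=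
            lt_of_lt_of_le h0 (le_marg hp (fun v : 𝒳 × 𝒴 × 𝒵 => (v.1, v.2.1)) t)
          have hr : r t.1 u.1 := by
            rw [hrdef]
            exact ⟨t.2.1, h1t, h1u⟩
          exact hnotin ⟨(hf_of_eqv _ _ (Relation.EqvGen.rel _ _ hr)).symm, hu⟩
      rw [hmarg]
  · -- cmi ((X,Y); Z | U) = 0
    have hcmi4 : cmi μ (fun ω => (X ω, Y ω)) Z (fun ω => f (X ω))
        = ent μ (fun ω => ((X ω, Y ω), f (X ω))) + ent μ (fun ω => (Z ω, f (X ω)))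
          - ent μ (fun ω => ((X ω, Y ω), Z ω, f (X ω))) - ent μ (fun ω => f (X ω)) := rfl
    rw [hcmi4]
    rw [show ent μ (fun ω => ((X ω, Y ω), f (X ω))) = ∑ t : 𝒳 × 𝒴 × 𝒵,
        -(p t * Real.logb 2 (marg p (fun u : 𝒳 × 𝒴 × 𝒵 => ((u.1, u.2.1), f u.1))
          ((t.1, t.2.1), f t.1))) from
      entRep μ W hW (fun u : 𝒳 × 𝒴 × 𝒵 => ((u.1, u.2.1), f u.1))]
    rw [show ent μ (fun ω => (Z ω, f (X ω))) = ∑ t : 𝒳 × 𝒴 × 𝒵,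
        -(p t * Real.logb 2 (marg p (fun u : 𝒳 × 𝒴 × 𝒵 => (u.2.2, f u.1)) (t.2.2, f t.1))) from
      entRep μ W hW (fun u : 𝒳 × 𝒴 × 𝒵 => (u.2.2, f u.1))]
    rw [show ent μ (fun ω => ((X ω, Y ω), Z ω, f (X ω))) = ∑ t : 𝒳 × 𝒴 × 𝒵,
        -(p t * Real.logb 2 (marg p (fun u : 𝒳 × 𝒴 × 𝒵 => ((u.1, u.2.1), u.2.2, f u.1))
          ((t.1, t.2.1), t.2.2, f t.1))) from
      entRep μ W hW (fun u : 𝒳 × 𝒴 × 𝒵 => ((u.1, u.2.1), u.2.2, f u.1))]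
    rw [show ent μ (fun ω => f (X ω)) = ∑ t : 𝒳 × 𝒴 × 𝒵,
        -(p t * Real.logb 2 (marg p (fun u : 𝒳 × 𝒴 × 𝒵 => f u.1) (f t.1))) from
      entRep μ W hW (fun u : 𝒳 × 𝒴 × 𝒵 => f u.1)]
    rw [← Finset.sum_add_distrib, ← Finset.sum_sub_distrib, ← Finset.sum_sub_distrib]
    refine Finset.sum_eq_zero fun t _ => ?_
    rw [marg_congr (g1 := fun u : 𝒳 × 𝒴 × 𝒵 => ((u.1, u.2.1), f u.1))
      (g2 := fun u : 𝒳 × 𝒴 × 𝒵 => (u.1, u.2.1)) (s := ((t.1, t.2.1), f t.1))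
      (s' := (t.1, t.2.1)) (fun u => by
        simp only [Prod.ext_iff]
        constructor
        · exact fun h => ⟨h.1.1, h.1.2⟩
        · exact fun h => ⟨⟨h.1, h.2⟩, by rw [h.1]⟩)]
    rw [marg_congr (g1 := fun u : 𝒳 × 𝒴 × 𝒵 => ((u.1, u.2.1), u.2.2, f u.1))
      (g2 := id) (s := ((t.1, t.2.1), t.2.2, f t.1)) (s' := t) (fun u => by
        constructor
        · intro h
          have h1 : u.1 = t.1 := congrArg (fun q => q.1.1) h
          have h2 : u.2.1 = t.2.1 := congrArg (fun q => q.1.2) h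
          have h3 : u.2.2 = t.2.2 := congrArg (fun q => q.2.1) h
          exact Prod.ext h1 (Prod.ext h2 h3)
        · rintro rfl; rfl), marg_self]
    rcases eq_or_lt_of_le (hp t) with h0 | h0
    · rw [← h0]; ring
    · have hXYpos : 0 < marg p (fun u : 𝒳 × 𝒴 × 𝒵 => (u.1, u.2.1)) (t.1, t.2.1) :=
        lt_of_lt_of_le h0 (le_marg hp (fun u : 𝒳 × 𝒴 × 𝒵 => (u.1, u.2.1)) t)
      have hZUpos : 0 < marg p (fun u : 𝒳 × 𝒴 × 𝒵 => (u.2.2, f u.1)) (t.2.2, f t.1) :=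
        lt_of_lt_of_le h0 (le_marg hp (fun u : 𝒳 × 𝒴 × 𝒵 => (u.2.2, f u.1)) t)
      have hUpos : 0 < marg p (fun u : 𝒳 × 𝒴 × 𝒵 => f u.1) (f t.1) :=
        lt_of_lt_of_le h0 (le_marg hp (fun u : 𝒳 × 𝒴 × 𝒵 => f u.1) t)
      have crux : p t * marg p (fun u : 𝒳 × 𝒴 × 𝒵 => f u.1) (f t.1)
          = marg p (fun u : 𝒳 × 𝒴 × 𝒵 => (u.1, u.2.1)) (t.1, t.2.1)
            * marg p (fun u : 𝒳 × 𝒴 × 𝒵 => (u.2.2, f u.1)) (t.2.2, f t.1) := by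
        have hmU : marg p (fun u : 𝒳 × 𝒴 × 𝒵 => f u.1) (f t.1)
            = ∑ x' ∈ Finset.univ.filter (fun x' => f x' = f t.1),
                marg p (fun u : 𝒳 × 𝒴 × 𝒵 => u.1) x' :=
          marg_comp (fun u : 𝒳 × 𝒴 × 𝒵 => u.1) f (f t.1)
        have hmZU : marg p (fun u : 𝒳 × 𝒴 × 𝒵 => (u.2.2, f u.1)) (t.2.2, f t.1)
            = ∑ x' ∈ Finset.univ.filter (fun x' => f x' = f t.1),
                marg p (fun u : 𝒳 × 𝒴 × 𝒵 => (u.1, u.2.2)) (x', t.2.2) := by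
          rw [show marg p (fun u : 𝒳 × 𝒴 × 𝒵 => (u.2.2, f u.1)) (t.2.2, f t.1)
              = ∑ s ∈ Finset.univ.filter (fun s : 𝒳 × 𝒵 => (s.2, f s.1) = (t.2.2, f t.1)),
                  marg p (fun u : 𝒳 × 𝒴 × 𝒵 => (u.1, u.2.2)) s from
            marg_comp (fun u : 𝒳 × 𝒴 × 𝒵 => (u.1, u.2.2)) (fun s => (s.2, f s.1))
              (t.2.2, f t.1)]
          exact sum_filter_pair f _ t.2.2 (f t.1)
        rw [hmU, hmZU, Finset.mul_sum, Finset.mul_sum]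
        refine Finset.sum_congr rfl fun x' hx' => ?_
        simp only [Finset.mem_filter, Finset.mem_univ, true_and] at hx'
        have hequiv : Relation.EqvGen r t.1 x' := heqv_of_f _ _ hx'.symm
        rcases hchain _ _ hequiv with heq | ⟨hx0, hx'0, hq⟩
        · rw [← heq]
          exact key2 t
        · refine mul_right_cancel₀ (ne_of_gt hx0) ?_
          linear_combination marg p (fun u : 𝒳 × 𝒴 × 𝒵 => u.1) x' * key2 t
            + marg p (fun u : 𝒳 × 𝒴 × 𝒵 => (u.1, u.2.1)) (t.1, t.2.1) * hq t.2.2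
      have hlogs : Real.logb 2 (p t) + Real.logb 2 (marg p (fun u : 𝒳 × 𝒴 × 𝒵 => f u.1) (f t.1))
          = Real.logb 2 (marg p (fun u : 𝒳 × 𝒴 × 𝒵 => (u.1, u.2.1)) (t.1, t.2.1))
            + Real.logb 2 (marg p (fun u : 𝒳 × 𝒴 × 𝒵 => (u.2.2, f u.1)) (t.2.2, f t.1)) := by
        have e : Real.logb 2 (p t * marg p (fun u : 𝒳 × 𝒴 × 𝒵 => f u.1) (f t.1))
            = Real.logb 2 (marg p (fun u : 𝒳 × 𝒴 × 𝒵 => (u.1, u.2.1)) (t.1, t.2.1)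
              * marg p (fun u : 𝒳 × 𝒴 × 𝒵 => (u.2.2, f u.1)) (t.2.2, f t.1)) := by
          rw [crux]
        rw [Real.logb_mul (ne_of_gt h0) (ne_of_gt hUpos),
          Real.logb_mul (ne_of_gt hXYpos) (ne_of_gt hZUpos)] at e
        exact e
      linear_combination (p t) * hlogs
end

section
/- Existence of the Gács–Körner common part: Let X and Y be random variables on a common probability space taking values in finite sets. Then there exists a random variable U on the same probability space, taking values in a finite set, such that H(U|X) = 0 and H(U|Y) = 0, and for every random variable V on the same probability space taking values in a finite set with H(V|X) = 0 and H(V|Y) = 0, one has H(V|U) = 0. -/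
open MeasureTheory

section Aux
open Real

lemma ent_congr_ae {Ω : Type*} [MeasurableSpace Ω] (μ : Measure Ω) {S : Type*}
    {W W' : Ω → S} (h : μ {ω | W ω ≠ W' ω} = 0) : ent μ W = ent μ W' := by
  unfold ent
  have main : ∀ (A B : Ω → S), μ {ω | A ω ≠ B ω} = 0 → ∀ s, μ (A ⁻¹' {s}) ≤ μ (B ⁻¹' {s}) := by
    intro A B hAB s
    calc μ (A ⁻¹' {s}) ≤ μ (B ⁻¹' {s} ∪ {ω | A ω ≠ B ω}) := by
          apply measure_mono; intro ω hω
          by_cases h' : A ω = B ω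
          · left; simp only [Set.mem_preimage, Set.mem_singleton_iff] at *; rw [← h']; exact hω
          · right; exact h'
      _ ≤ μ (B ⁻¹' {s}) + μ {ω | A ω ≠ B ω} := measure_union_le _ _
      _ = μ (B ⁻¹' {s}) := by rw [hAB, add_zero]
  have key : ∀ s : S, μ (W ⁻¹' {s}) = μ (W' ⁻¹' {s}) := by
    intro s
    refine le_antisymm (main W W' h s) (main W' W ?_ s)
    have : {ω | W' ω ≠ W ω} = {ω | W ω ≠ W' ω} := by ext ω; exact ne_comm
    rw [this]; exact h
  exact tsum_congr fun s => by rw [key s]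

lemma ent_pair_comp {Ω : Type*} [MeasurableSpace Ω] (μ : Measure Ω) {S T : Type*}
    [Fintype S] [Fintype T] (X : Ω → S) (f : S → T) :
    ent μ (fun ω => (f (X ω), X ω)) = ent μ X := by
  classical
  unfold ent
  rw [tsum_fintype, tsum_fintype, Fintype.sum_prod_type, Finset.sum_comm]
  apply Finset.sum_congr rfl
  intro s _
  have key : ∀ t : T, (fun ω => (f (X ω), X ω)) ⁻¹' {(t, s)}
      = if t = f s then X ⁻¹' {s} else ∅ := by
    intro t; ext ω
    by_cases h : t = f s <;>
      simp [Set.mem_preimage, Prod.ext_iff, h, and_comm] <;> aesop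
  rw [Finset.sum_eq_single_of_mem (f s) (Finset.mem_univ _)]
  · rw [key (f s), if_pos rfl]
  · intro t _ ht
    rw [key t, if_neg ht]
    simp

lemma real_aux {T : Type*} [Fintype T] (a : T → ℝ) (b : ℝ) (hab : ∑ t, a t = b) :
    ∑ t, -(a t * logb 2 (a t)) - -(b * logb 2 b)
      = ∑ t, a t * (logb 2 b - logb 2 (a t)) := by
  have h1 : ∑ t, a t * (logb 2 b - logb 2 (a t))
      = (∑ t, a t) * logb 2 b - ∑ t, a t * logb 2 (a t) := by
    rw [Finset.sum_mul, ← Finset.sum_sub_distrib]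
    exact Finset.sum_congr rfl fun t _ => by ring
  rw [h1, hab, Finset.sum_neg_distrib]
  ring

lemma condEnt_zero_fn {Ω : Type*} [MeasurableSpace Ω] (μ : Measure Ω) [IsFiniteMeasure μ]
    {S T : Type*} [Fintype S] [Fintype T] [Nonempty T]
    (X : Ω → S) (V : Ω → T) (hX : DMeasurable X) (hV : DMeasurable V)
    (h : condEnt μ V X = 0) : ∃ f : S → T, μ {ω | V ω ≠ f (X ω)} = 0 := by
  classical
  set q : S → T → ℝ := fun s t => (μ (V ⁻¹' {t} ∩ X ⁻¹' {s})).toReal with hq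
  set p : S → ℝ := fun s => (μ (X ⁻¹' {s})).toReal with hp
  have marg : ∀ s : S, ∑ t, (μ (V ⁻¹' {t} ∩ X ⁻¹' {s})).toReal = (μ (X ⁻¹' {s})).toReal := by
    intro s
    have hun : X ⁻¹' {s} = ⋃ t, V ⁻¹' {t} ∩ X ⁻¹' {s} := by
      ext ω; simp [Set.mem_iUnion]
    have hdisj : Pairwise (Function.onFun Disjoint fun t => V ⁻¹' {t} ∩ X ⁻¹' {s}) := by
      intro t t' htt'
      simp only [Function.onFun, Set.disjoint_left]
      rintro ω ⟨h1, _⟩ ⟨h2, _⟩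
      exact htt' (h1.symm.trans h2)
    have hm : μ (X ⁻¹' {s}) = ∑ t, μ (V ⁻¹' {t} ∩ X ⁻¹' {s}) := by
      conv_lhs => rw [hun]
      rw [measure_iUnion hdisj (fun t => (hV t).inter (hX s)), tsum_fintype]
    rw [hm, ENNReal.toReal_sum (fun t _ => measure_ne_top μ _)]
  have margqp : ∀ s, ∑ t, q s t = p s := fun s => marg s
  have qnn : ∀ s t, 0 ≤ q s t := fun s t => ENNReal.toReal_nonneg
  have qlep : ∀ s t, q s t ≤ p s := fun s t =>
    ENNReal.toReal_mono (measure_ne_top μ _) (measure_mono Set.inter_subset_right)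
  have hce : condEnt μ V X = ∑ s, ∑ t, q s t * (logb 2 (p s) - logb 2 (q s t)) := by
    unfold condEnt ent
    rw [tsum_fintype, tsum_fintype, Fintype.sum_prod_type, Finset.sum_comm,
      ← Finset.sum_sub_distrib]
    apply Finset.sum_congr rfl
    intro s _
    have hpre : ∀ t : T, (fun ω => (V ω, X ω)) ⁻¹' {(t, s)} = V ⁻¹' {t} ∩ X ⁻¹' {s} := by
      intro t; ext ω; simp [Prod.ext_iff]
    simp only [hpre]
    exact real_aux (fun t => (μ (V ⁻¹' {t} ∩ X ⁻¹' {s})).toReal) _ (marg s)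
  have termnn : ∀ s t, 0 ≤ q s t * (logb 2 (p s) - logb 2 (q s t)) := by
    intro s t
    rcases eq_or_lt_of_le (qnn s t) with h0 | h0
    · rw [← h0]; simp
    · have hps : 0 < p s := lt_of_lt_of_le h0 (qlep s t)
      have := Real.logb_le_logb_of_le (b := 2) one_lt_two h0 (qlep s t)
      nlinarith
  rw [hce] at h
  have allzero : ∀ s t, q s t * (logb 2 (p s) - logb 2 (q s t)) = 0 := by
    have h1 := (Finset.sum_eq_zero_iff_of_nonneg
      (fun s _ => Finset.sum_nonneg fun t _ => termnn s t)).mp h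
    intro s t
    exact (Finset.sum_eq_zero_iff_of_nonneg (fun t _ => termnn s t)).mp
      (h1 s (Finset.mem_univ s)) t (Finset.mem_univ t)
  have qeq : ∀ s t, q s t = 0 ∨ q s t = p s := by
    intro s t
    rcases mul_eq_zero.mp (allzero s t) with h0 | h0
    · left; exact h0
    · rcases eq_or_lt_of_le (qnn s t) with hq0 | hq0
      · left; exact hq0.symm
      · right
        have hps : 0 < p s := lt_of_lt_of_le hq0 (qlep s t)
        have hlog : logb 2 (q s t) = logb 2 (p s) := by linarith
        exact Real.logb_injOn_pos one_lt_two (Set.mem_Ioi.mpr hq0) (Set.mem_Ioi.mpr hps) hlog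
  have hf : ∀ s : S, ∃ t : T, p s ≠ 0 → q s t ≠ 0 := by
    intro s
    by_cases hs : p s = 0
    · exact ⟨Classical.arbitrary T, fun h => absurd hs h⟩
    · have : ∃ t, q s t ≠ 0 := by
        by_contra hc
        push_neg at hc
        apply hs
        rw [← margqp s]
        exact Finset.sum_eq_zero fun t _ => hc t
      obtain ⟨t, ht⟩ := this
      exact ⟨t, fun _ => ht⟩
  choose f hfspec using hf
  refine ⟨f, ?_⟩
  have hsub : {ω | V ω ≠ f (X ω)} ⊆
      ⋃ st : S × T, if st.2 = f st.1 then ∅ else V ⁻¹' {st.2} ∩ X ⁻¹' {st.1} := by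
    intro ω hω
    refine Set.mem_iUnion.mpr ⟨(X ω, V ω), ?_⟩
    rw [if_neg hω]
    exact ⟨rfl, rfl⟩
  refine measure_mono_null hsub (measure_iUnion_null fun ⟨s, t⟩ => ?_)
  by_cases hts : t = f s
  · simp [hts]
  · rw [if_neg hts]
    have key : q s t = 0 → μ (V ⁻¹' {t} ∩ X ⁻¹' {s}) = 0 := by
      intro h0
      have hne := measure_ne_top μ (V ⁻¹' {t} ∩ X ⁻¹' {s})
      rw [hq] at h0
      simp only [ENNReal.toReal_eq_zero_iff] at h0
      tauto
    by_cases hs : p s = 0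
    · apply key
      have := qlep s t
      have := qnn s t
      linarith
    · have hfq : q s (f s) = p s := by
        rcases qeq s (f s) with h0 | h0
        · exact absurd h0 (hfspec s hs)
        · exact h0
      apply key
      have hsum : ∑ t', q s t' = p s := margqp s
      have hsplit : q s t + ∑ t' ∈ Finset.univ.erase t, q s t' = p s := by
        rw [Finset.add_sum_erase _ _ (Finset.mem_univ t)]; exact hsum
      have hmem : f s ∈ Finset.univ.erase t :=
        Finset.mem_erase.mpr ⟨fun h => hts h.symm, Finset.mem_univ _⟩
      have hge : q s (f s) ≤ ∑ t' ∈ Finset.univ.erase t, q s t' :=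
        Finset.single_le_sum (fun t' _ => qnn s t') hmem
      nlinarith [qnn s t]

lemma dmeas_comp {Ω : Type*} [MeasurableSpace Ω] {S T : Type*} [Fintype S]
    {X : Ω → S} (hX : DMeasurable X) (g : S → T) : DMeasurable (fun ω => g (X ω)) := by
  intro t
  have : (fun ω => g (X ω)) ⁻¹' {t} = ⋃ x ∈ {x | g x = t}, X ⁻¹' {x} := by
    ext ω; simp [Set.mem_iUnion]
  rw [this]
  exact Set.Finite.measurableSet_biUnion (Set.toFinite _) (fun x _ => hX x)

end Aux

/-- Existence of the Gács–Körner common part. -/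
theorem gacs_korner_common_part {Ω 𝒳 𝒴 : Type} [MeasurableSpace Ω] (μ : Measure Ω)
    [IsProbabilityMeasure μ] [Fintype 𝒳] [Fintype 𝒴]
    (X : Ω → 𝒳) (Y : Ω → 𝒴) (hX : DMeasurable X) (hY : DMeasurable Y) :
    ∃ (𝒰 : Type) (_ : Fintype 𝒰) (U : Ω → 𝒰), DMeasurable U ∧
      condEnt μ U X = 0 ∧ condEnt μ U Y = 0 ∧
      ∀ (𝒱 : Type) (_ : Fintype 𝒱) (V : Ω → 𝒱), DMeasurable V →
        condEnt μ V X = 0 → condEnt μ V Y = 0 → condEnt μ V U = 0 := by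
  classical
  have hΩne : Nonempty Ω := by
    by_contra hc
    have he : (Set.univ : Set Ω) = ∅ := by
      ext ω; exact absurd ⟨ω⟩ hc
    have h1 : μ Set.univ = 1 := measure_univ
    rw [he] at h1
    simp at h1
  have hXne : Nonempty 𝒳 := ⟨X (Classical.choice hΩne)⟩
  set R : 𝒳 → 𝒳 → Prop := fun x x' =>
    ∃ y, μ (X ⁻¹' {x} ∩ Y ⁻¹' {y}) ≠ 0 ∧ μ (X ⁻¹' {x'} ∩ Y ⁻¹' {y}) ≠ 0 with hR
  let st : Setoid 𝒳 := ⟨Relation.EqvGen R, Relation.EqvGen.is_equivalence R⟩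
  let c : 𝒳 → Quotient st := fun x => Quotient.mk st x
  haveI : Fintype (Quotient st) := Fintype.ofSurjective c (fun u => ⟨u.out, Quotient.out_eq u⟩)
  refine ⟨Quotient st, inferInstance, fun ω => c (X ω), dmeas_comp hX c, ?_, ?_, ?_⟩
  · -- H(U|X) = 0
    have : condEnt μ (fun ω => c (X ω)) X
        = ent μ (fun ω => (c (X ω), X ω)) - ent μ X := rfl
    rw [this, ent_pair_comp, sub_self]
  · -- H(U|Y) = 0
    have hg : ∀ y : 𝒴, ∃ u : Quotient st,
        ∀ x, μ (X ⁻¹' {x} ∩ Y ⁻¹' {y}) ≠ 0 → c x = u := by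
      intro y
      by_cases h : ∃ x, μ (X ⁻¹' {x} ∩ Y ⁻¹' {y}) ≠ 0
      · obtain ⟨x₀, hx₀⟩ := h
        refine ⟨c x₀, fun x hx => ?_⟩
        exact Quotient.sound (Relation.EqvGen.rel _ _ ⟨y, hx, hx₀⟩)
      · push_neg at h
        exact ⟨c (Classical.arbitrary 𝒳), fun x hx => absurd (h x) hx⟩
    choose g hgspec using hg
    have hnull : μ {ω | c (X ω) ≠ g (Y ω)} = 0 := by
      have hsub : {ω | c (X ω) ≠ g (Y ω)} ⊆
          ⋃ xy : 𝒳 × 𝒴, if c xy.1 = g xy.2 then ∅ else X ⁻¹' {xy.1} ∩ Y ⁻¹' {xy.2} := by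
        intro ω hω
        refine Set.mem_iUnion.mpr ⟨(X ω, Y ω), ?_⟩
        rw [if_neg hω]
        exact ⟨rfl, rfl⟩
      refine measure_mono_null hsub (measure_iUnion_null fun ⟨x, y⟩ => ?_)
      by_cases hc : c x = g y
      · simp [hc]
      · rw [if_neg hc]
        by_contra hm
        exact hc (hgspec y x hm)
    have h1 : condEnt μ (fun ω => c (X ω)) Y
        = ent μ (fun ω => (c (X ω), Y ω)) - ent μ Y := rfl
    have h2 : ent μ (fun ω => (c (X ω), Y ω)) = ent μ (fun ω => (g (Y ω), Y ω)) := by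
      apply ent_congr_ae
      refine measure_mono_null ?_ hnull
      intro ω hω
      simp only [Set.mem_setOf_eq] at hω ⊢
      exact fun heq => hω (by rw [heq])
    rw [h1, h2, ent_pair_comp, sub_self]
  · -- maximality
    intro 𝒱 _ V hV hVX hVY
    haveI : Nonempty 𝒱 := ⟨V (Classical.choice hΩne)⟩
    obtain ⟨f, hf⟩ := condEnt_zero_fn μ X V hX hV hVX
    obtain ⟨g, hg⟩ := condEnt_zero_fn μ Y V hY hV hVY
    -- f x = g y whenever the joint event has positive measure
    have key : ∀ x y, μ (X ⁻¹' {x} ∩ Y ⁻¹' {y}) ≠ 0 → f x = g y := by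
      intro x y hxy
      have hN : μ ({ω | V ω ≠ f (X ω)} ∪ {ω | V ω ≠ g (Y ω)}) = 0 :=
        measure_union_null hf hg
      have hne : ∃ ω, ω ∈ (X ⁻¹' {x} ∩ Y ⁻¹' {y}) \
          ({ω | V ω ≠ f (X ω)} ∪ {ω | V ω ≠ g (Y ω)}) := by
        by_contra hc
        push_neg at hc
        apply hxy
        have hsub : X ⁻¹' {x} ∩ Y ⁻¹' {y} ⊆
            {ω | V ω ≠ f (X ω)} ∪ {ω | V ω ≠ g (Y ω)} := by
          intro ω hω
          by_contra hn
          exact hc ω ⟨hω, hn⟩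
        exact measure_mono_null hsub hN
      obtain ⟨ω, ⟨⟨hx, hy⟩, hn⟩⟩ := hne
      simp only [Set.mem_union, Set.mem_setOf_eq, not_or, not_not] at hn
      obtain ⟨h1, h2⟩ := hn
      simp only [Set.mem_preimage, Set.mem_singleton_iff] at hx hy
      rw [← hx, ← hy, ← h1, ← h2]
    -- f is constant on EqvGen classes
    have hconst : ∀ x x', Relation.EqvGen R x x' → f x = f x' := by
      intro x x' h
      induction h with
      | rel a b hab =>
          obtain ⟨y, h1, h2⟩ := hab
          rw [key a y h1, ← key b y h2]
      | refl a => rfl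
      | symm a b _ ih => exact ih.symm
      | trans a b d _ _ ih1 ih2 => exact ih1.trans ih2
    let h' : Quotient st → 𝒱 := fun u => f u.out
    have hsub : {ω | V ω ≠ h' (c (X ω))} ⊆ {ω | V ω ≠ f (X ω)} := by
      intro ω hω
      simp only [Set.mem_setOf_eq] at hω ⊢
      intro heq
      apply hω
      rw [heq]
      exact (hconst _ _ (Quotient.exact (Quotient.out_eq (c (X ω))))).symm
    have hnull : μ {ω | V ω ≠ h' (c (X ω))} = 0 := measure_mono_null hsub hf
    have h1 : condEnt μ V (fun ω => c (X ω))
        = ent μ (fun ω => (V ω, c (X ω))) - ent μ (fun ω => c (X ω)) := rfl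
    have h2 : ent μ (fun ω => (V ω, c (X ω))) = ent μ (fun ω => (h' (c (X ω)), c (X ω))) := by
      apply ent_congr_ae
      refine measure_mono_null ?_ hnull
      intro ω hω
      simp only [Set.mem_setOf_eq] at hω ⊢
      exact fun heq => hω (by rw [heq])
    have h3 : ent μ (fun ω => (h' (c (X ω)), c (X ω))) = ent μ (fun ω => c (X ω)) :=
      ent_pair_comp μ (fun ω => c (X ω)) h'
    rw [h1, h2, h3, sub_self]
end

section
/- Existence of the minimal sufficient statistic: Let X and Y be random variables on a common probability space taking values in finite sets. Then there exists a random variable U on the same probability space, taking values in a finite set, such that H(U|X) = 0 and I(X;Y|U) = 0, and for every random variable V on the same probability space taking values in a finite set with H(V|X) = 0 and I(X;Y|V) = 0, one has H(U|V) = 0. -/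
open MeasureTheory

/-- negative x log x (natural log) -/
noncomputable def nxl (t : ℝ) : ℝ := -(t * Real.log t)

lemma nxl_zero : nxl 0 = 0 := by simp [nxl]

lemma hh_eq (t : ℝ) : -(t * Real.logb 2 t) = nxl t / Real.log 2 := by
  simp [nxl, Real.logb, neg_div]; ring

lemma sum_nxl_ge {ι : Type*} (s : Finset ι) (a : ι → ℝ) (ha : ∀ i ∈ s, 0 ≤ a i) :
    (nxl (∑ i ∈ s, a i) ≤ ∑ i ∈ s, nxl (a i)) ∧
    (nxl (∑ i ∈ s, a i) = ∑ i ∈ s, nxl (a i) →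
      ∀ i ∈ s, a i = 0 ∨ a i = ∑ j ∈ s, a j) := by
  set S := ∑ i ∈ s, a i with hS
  have hexp : nxl S = ∑ i ∈ s, -(a i * Real.log S) := by
    rw [nxl, hS, Finset.sum_mul]
    rw [← Finset.sum_neg_distrib]
  have key : ∀ i ∈ s, -(a i * Real.log S) ≤ nxl (a i) := by
    intro i hi
    rcases (ha i hi).eq_or_lt with h0 | h0
    · simp [nxl, ← h0]
    · have hiS : a i ≤ S := Finset.single_le_sum ha hi
      have hlog : Real.log (a i) ≤ Real.log S := Real.log_le_log h0 hiS
      simp only [nxl, neg_le_neg_iff]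
      exact mul_le_mul_of_nonneg_left hlog (le_of_lt h0)
  constructor
  · rw [hexp]; exact Finset.sum_le_sum key
  · intro heq i hi
    rw [hexp] at heq
    have := (Finset.sum_eq_sum_iff_of_le key).mp heq i hi
    rcases (ha i hi).eq_or_lt with h0 | h0
    · exact Or.inl h0.symm
    · right
      have hiS : a i ≤ S := Finset.single_le_sum ha hi
      have hS0 : 0 < S := lt_of_lt_of_le h0 hiS
      have : Real.log S = Real.log (a i) := by
        have := this
        simp only [nxl, neg_inj] at this
        exact mul_left_cancel₀ (ne_of_gt h0) this
      calc a i = Real.exp (Real.log (a i)) := (Real.exp_log h0).symm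
        _ = Real.exp (Real.log S) := by rw [this]
        _ = S := Real.exp_log hS0

lemma gibbs {ι : Type*} (s : Finset ι) (p q : ι → ℝ)
    (hp : ∀ i ∈ s, 0 ≤ p i) (hq : ∀ i ∈ s, 0 ≤ q i)
    (hpq : ∀ i ∈ s, p i ≠ 0 → 0 < q i)
    (h1 : ∑ i ∈ s, p i = 1) (h2 : ∑ i ∈ s, q i = 1) :
    (0 ≤ ∑ i ∈ s, p i * (Real.log (p i) - Real.log (q i))) ∧
    (∑ i ∈ s, p i * (Real.log (p i) - Real.log (q i)) = 0 → ∀ i ∈ s, p i = q i) := by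
  have key : ∀ i ∈ s, p i * (Real.log (q i) - Real.log (p i)) ≤ q i - p i := by
    intro i hi
    rcases eq_or_ne (p i) 0 with h0 | h0
    · simp [h0]; exact hq i hi
    · have hp0 : 0 < p i := lt_of_le_of_ne (hp i hi) (Ne.symm h0)
      have hq0 : 0 < q i := hpq i hi h0
      have hx : 0 < q i / p i := div_pos hq0 hp0
      have := Real.log_le_sub_one_of_pos hx
      rw [Real.log_div (ne_of_gt hq0) (ne_of_gt hp0)] at this
      have := mul_le_mul_of_nonneg_left this (le_of_lt hp0)
      calc p i * (Real.log (q i) - Real.log (p i)) ≤ p i * (q i / p i - 1) := this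
        _ = q i - p i := by field_simp
  have hsumle : ∑ i ∈ s, p i * (Real.log (q i) - Real.log (p i)) ≤ 0 := by
    calc ∑ i ∈ s, p i * (Real.log (q i) - Real.log (p i)) ≤ ∑ i ∈ s, (q i - p i) :=
          Finset.sum_le_sum key
      _ = 0 := by rw [Finset.sum_sub_distrib, h1, h2]; ring
  have hflip : ∑ i ∈ s, p i * (Real.log (p i) - Real.log (q i))
      = -∑ i ∈ s, p i * (Real.log (q i) - Real.log (p i)) := by
    rw [← Finset.sum_neg_distrib]; apply Finset.sum_congr rfl; intro i _; ring
  constructor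
  · rw [hflip]; linarith
  · intro heq i hi
    have hz : ∑ i ∈ s, p i * (Real.log (q i) - Real.log (p i)) = 0 := by
      rw [hflip] at heq; linarith
    have hz2 : ∑ i ∈ s, p i * (Real.log (q i) - Real.log (p i)) = ∑ i ∈ s, (q i - p i) := by
      rw [hz, Finset.sum_sub_distrib, h1, h2]; ring
    have hterm := (Finset.sum_eq_sum_iff_of_le key).mp hz2 i hi
    rcases eq_or_ne (p i) 0 with h0 | h0
    · rw [h0]; rw [h0] at hterm; simp at hterm; linarith
    · have hp0 : 0 < p i := lt_of_le_of_ne (hp i hi) (Ne.symm h0)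
      have hq0 : 0 < q i := hpq i hi h0
      by_contra hne
      have hx1 : q i / p i ≠ 1 := by
        intro h; exact hne ((div_eq_one_iff_eq (ne_of_gt hp0)).mp h).symm
      have hstrict := Real.log_lt_sub_one_of_pos (div_pos hq0 hp0) hx1
      rw [Real.log_div (ne_of_gt hq0) (ne_of_gt hp0)] at hstrict
      have := mul_lt_mul_of_pos_left hstrict hp0
      have h2' : p i * (q i / p i - 1) = q i - p i := by field_simp
      rw [h2'] at this
      linarith


variable {Ω : Type*} [MeasurableSpace Ω] {μ : Measure Ω}

lemma pair_preimage {S T : Type*} (W : Ω → S) (Z : Ω → T) (s : S) (t : T) :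
    (fun ω => (W ω, Z ω)) ⁻¹' {(s, t)} = W ⁻¹' {s} ∩ Z ⁻¹' {t} := by
  ext ω; simp [Prod.ext_iff]

lemma sum_measure_inter [IsFiniteMeasure μ] {T : Type*} [Fintype T] {W : Ω → T}
    (hW : DMeasurable W) {A : Set Ω} (hA : MeasurableSet A) :
    ∑ t : T, (μ (A ∩ W ⁻¹' {t})).toReal = (μ A).toReal := by
  have hU : A = ⋃ t, A ∩ W ⁻¹' {t} := by
    ext ω; simp
  have hdisj : Pairwise (Function.onFun Disjoint (fun t => A ∩ W ⁻¹' {t})) := by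
    intro i j hij
    apply Set.disjoint_left.mpr
    rintro ω ⟨-, hi⟩ ⟨-, hj⟩
    simp only [Set.mem_preimage, Set.mem_singleton_iff] at hi hj
    exact hij (hi ▸ hj ▸ rfl)
  rw [← ENNReal.toReal_sum (fun t _ => measure_ne_top μ _)]
  congr 1
  rw [← tsum_fintype (L := SummationFilter.unconditional _), ← measure_iUnion hdisj (fun t => hA.inter (hW t)), ← hU]


noncomputable def hh (t : ℝ) : ℝ := -(t * Real.logb 2 t)

lemma hh_zero : hh 0 = 0 := by simp [hh]

variable {Ω : Type*} [MeasurableSpace Ω] {μ : Measure Ω}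

lemma ent_fin {S : Type*} [Fintype S] (X : Ω → S) :
    ent μ X = ∑ s : S, hh ((μ (X ⁻¹' {s})).toReal) := by
  rw [ent, tsum_fintype]; rfl

lemma ent_comp_inj_s6 {S T : Type*} [Fintype S] [Fintype T] [DecidableEq T] (X : Ω → S)
    {e : S → T} (he : Function.Injective e) :
    ent μ (fun ω => e (X ω)) = ent μ X := by
  rw [ent_fin, ent_fin]
  have hzero : ∀ t ∈ Finset.univ \ Finset.univ.image e,
      hh ((μ ((fun ω => e (X ω)) ⁻¹' {t})).toReal) = 0 := by
    intro t ht
    simp only [Finset.mem_sdiff, Finset.mem_image, Finset.mem_univ, true_and,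
      not_exists] at ht
    have : (fun ω => e (X ω)) ⁻¹' {t} = ∅ := by
      ext ω; simp only [Set.mem_preimage, Set.mem_singleton_iff, Set.mem_empty_iff_false,
        iff_false]
      exact fun h => ht (X ω) h
    rw [this]
    simp [hh_zero]
  calc ∑ t : T, hh ((μ ((fun ω => e (X ω)) ⁻¹' {t})).toReal)
      = ∑ t ∈ Finset.univ.image e, hh ((μ ((fun ω => e (X ω)) ⁻¹' {t})).toReal) := by
        refine (Finset.sum_subset (Finset.subset_univ _) ?_).symm
        intro t _ ht
        exact hzero t (by simp [ht])
    _ = ∑ s : S, hh ((μ ((fun ω => e (X ω)) ⁻¹' {e s})).toReal) :=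
        Finset.sum_image (fun a _ b _ h => he h)
    _ = ∑ s : S, hh ((μ (X ⁻¹' {s})).toReal) := by
        apply Finset.sum_congr rfl
        intro s _
        have : (fun ω => e (X ω)) ⁻¹' {e s} = X ⁻¹' {s} := by
          ext ω; simp [he.eq_iff]
        rw [this]

-- hh version of superadditivity
lemma sum_hh_ge {ι : Type*} (s : Finset ι) (a : ι → ℝ) (ha : ∀ i ∈ s, 0 ≤ a i) :
    (hh (∑ i ∈ s, a i) ≤ ∑ i ∈ s, hh (a i)) ∧
    (hh (∑ i ∈ s, a i) = ∑ i ∈ s, hh (a i) →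
      ∀ i ∈ s, a i = 0 ∨ a i = ∑ j ∈ s, a j) := by
  have hlog2 : (0:ℝ) < Real.log 2 := Real.log_pos (by norm_num)
  have h1 : ∀ t : ℝ, hh t = nxl t / Real.log 2 := fun t => hh_eq t
  have hs : ∑ i ∈ s, hh (a i) = (∑ i ∈ s, nxl (a i)) / Real.log 2 := by
    rw [Finset.sum_div]; exact Finset.sum_congr rfl (fun i _ => h1 _)
  obtain ⟨hle, heqc⟩ := sum_nxl_ge s a ha
  constructor
  · rw [h1, hs]
    exact div_le_div_of_nonneg_right hle (le_of_lt hlog2)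
  · intro heq
    apply heqc
    rw [h1, hs] at heq
    field_simp at heq
    exact heq


section CE
variable {Ω : Type*} [MeasurableSpace Ω] {μ : Measure Ω} [IsProbabilityMeasure μ]
variable {S T : Type*} [Fintype S] [Fintype T]

-- entropy of a pair as double sum over P s t := μ(U⁻¹s ∩ V⁻¹t)
lemma ent_pair_eq (U : Ω → S) (V : Ω → T) :
    ent μ (fun ω => (U ω, V ω)) =
      ∑ t : T, ∑ s : S, hh ((μ (U ⁻¹' {s} ∩ V ⁻¹' {t})).toReal) := by
  rw [ent_fin]
  rw [Fintype.sum_prod_type]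
  rw [Finset.sum_comm]
  apply Finset.sum_congr rfl; intro t _
  apply Finset.sum_congr rfl; intro s _
  rw [pair_preimage]

lemma condEnt_eq_sum (U : Ω → S) (V : Ω → T) (hU : DMeasurable U) (hV : DMeasurable V) :
    condEnt μ U V = ∑ t : T,
      ((∑ s : S, hh ((μ (U ⁻¹' {s} ∩ V ⁻¹' {t})).toReal))
        - hh (∑ s : S, (μ (U ⁻¹' {s} ∩ V ⁻¹' {t})).toReal)) := by
  rw [condEnt, ent_pair_eq, ent_fin, Finset.sum_sub_distrib]
  congr 1
  apply Finset.sum_congr rfl; intro t _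
  congr 1
  have : ∑ s : S, (μ (U ⁻¹' {s} ∩ V ⁻¹' {t})).toReal
      = (μ (V ⁻¹' {t})).toReal := by
    rw [← sum_measure_inter hU (hV t)]
    apply Finset.sum_congr rfl; intro s _
    rw [Set.inter_comm]
  rw [this]

lemma condEnt_zero_of_fun (U : Ω → S) (V : Ω → T) (hU : DMeasurable U) (hV : DMeasurable V)
    (g : T → S) (h : ∀ s t, s ≠ g t → (μ (U ⁻¹' {s} ∩ V ⁻¹' {t})).toReal = 0) :
    condEnt μ U V = 0 := by
  rw [condEnt_eq_sum U V hU hV]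
  apply Finset.sum_eq_zero; intro t _
  have h1 : ∑ s : S, hh ((μ (U ⁻¹' {s} ∩ V ⁻¹' {t})).toReal)
      = hh ((μ (U ⁻¹' {g t} ∩ V ⁻¹' {t})).toReal) := by
    apply Finset.sum_eq_single
    · intro s _ hs; rw [h s t hs, hh_zero]
    · intro hmem; exact absurd (Finset.mem_univ _) hmem
  have h2 : ∑ s : S, (μ (U ⁻¹' {s} ∩ V ⁻¹' {t})).toReal
      = (μ (U ⁻¹' {g t} ∩ V ⁻¹' {t})).toReal := by
    apply Finset.sum_eq_single
    · intro s _ hs; exact h s t hs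
    · intro hmem; exact absurd (Finset.mem_univ _) hmem
  rw [h1, h2, sub_self]

lemma determ_of_condEnt_zero (V : Ω → S) (X : Ω → T) (hV : DMeasurable V)
    (hX : DMeasurable X) (h : condEnt μ V X = 0) :
    ∀ s t, (μ (V ⁻¹' {s} ∩ X ⁻¹' {t})).toReal = 0 ∨
      (μ (V ⁻¹' {s} ∩ X ⁻¹' {t})).toReal = (μ (X ⁻¹' {t})).toReal := by
  rw [condEnt_eq_sum V X hV hX] at h
  have hnn : ∀ t ∈ Finset.univ (α := T),
      0 ≤ (∑ s : S, hh ((μ (V ⁻¹' {s} ∩ X ⁻¹' {t})).toReal))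
        - hh (∑ s : S, (μ (V ⁻¹' {s} ∩ X ⁻¹' {t})).toReal) := by
    intro t _
    have := (sum_hh_ge Finset.univ (fun s => (μ (V ⁻¹' {s} ∩ X ⁻¹' {t})).toReal)
      (fun s _ => ENNReal.toReal_nonneg)).1
    linarith
  intro s t
  have hzero := (Finset.sum_eq_zero_iff_of_nonneg hnn).mp h t (Finset.mem_univ t)
  have heq : hh (∑ s : S, (μ (V ⁻¹' {s} ∩ X ⁻¹' {t})).toReal)
      = ∑ s : S, hh ((μ (V ⁻¹' {s} ∩ X ⁻¹' {t})).toReal) := by linarith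
  have hmarg : ∑ s : S, (μ (V ⁻¹' {s} ∩ X ⁻¹' {t})).toReal = (μ (X ⁻¹' {t})).toReal := by
    rw [← sum_measure_inter hV (hX t)]
    apply Finset.sum_congr rfl; intro s _
    rw [Set.inter_comm]
  have := (sum_hh_ge Finset.univ (fun s => (μ (V ⁻¹' {s} ∩ X ⁻¹' {t})).toReal)
    (fun s _ => ENNReal.toReal_nonneg)).2 heq s (Finset.mem_univ s)
  rcases this with h0 | h0
  · exact Or.inl h0
  · right; rw [h0, hmarg]

end CE



noncomputable def P3 {Ω 𝒳 𝒴 𝒵 : Type*} [MeasurableSpace Ω] (μ : Measure Ω)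
    (X : Ω → 𝒳) (Y : Ω → 𝒴) (Z : Ω → 𝒵) (x : 𝒳) (y : 𝒴) (z : 𝒵) : ℝ :=
  (μ (X ⁻¹' {x} ∩ Y ⁻¹' {y} ∩ Z ⁻¹' {z})).toReal

noncomputable def P2 {Ω 𝒳 𝒵 : Type*} [MeasurableSpace Ω] (μ : Measure Ω)
    (X : Ω → 𝒳) (Z : Ω → 𝒵) (x : 𝒳) (z : 𝒵) : ℝ :=
  (μ (X ⁻¹' {x} ∩ Z ⁻¹' {z})).toReal

noncomputable def P1 {Ω 𝒵 : Type*} [MeasurableSpace Ω] (μ : Measure Ω)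
    (Z : Ω → 𝒵) (z : 𝒵) : ℝ :=
  (μ (Z ⁻¹' {z})).toReal

section CMI
variable {Ω : Type*} [MeasurableSpace Ω] {μ : Measure Ω} [IsProbabilityMeasure μ]
variable {𝒳 𝒴 𝒵 : Type*} [Fintype 𝒳] [Fintype 𝒴] [Fintype 𝒵]
variable {X : Ω → 𝒳} {Y : Ω → 𝒴} {Z : Ω → 𝒵}

lemma toReal_mono_subset {A B : Set Ω} (h : A ⊆ B) : (μ A).toReal ≤ (μ B).toReal :=
  ENNReal.toReal_mono (measure_ne_top μ B) (measure_mono h)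

lemma P3_nonneg (x y z) : 0 ≤ P3 μ X Y Z x y z := ENNReal.toReal_nonneg
lemma P2_nonneg (x z) : 0 ≤ P2 μ X Z x z := ENNReal.toReal_nonneg
lemma P1_nonneg (z) : 0 ≤ P1 μ Z z := ENNReal.toReal_nonneg

lemma P3_le_PXZ (x y z) : P3 μ X Y Z x y z ≤ P2 μ X Z x z := by
  apply toReal_mono_subset
  rintro ω ⟨⟨h1, h2⟩, h3⟩; exact ⟨h1, h3⟩

lemma P3_le_PYZ (x y z) : P3 μ X Y Z x y z ≤ P2 μ Y Z y z := by
  apply toReal_mono_subset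
  rintro ω ⟨⟨h1, h2⟩, h3⟩; exact ⟨h2, h3⟩

lemma P2_le_P1 (x z) : P2 μ X Z x z ≤ P1 μ Z z := by
  apply toReal_mono_subset
  rintro ω ⟨h1, h2⟩; exact h2

lemma pair_meas (hX : DMeasurable X) (hZ : DMeasurable Z) (x : 𝒳) (z : 𝒵) :
    MeasurableSet (X ⁻¹' {x} ∩ Z ⁻¹' {z}) := (hX x).inter (hZ z)

lemma mar_y (hY : DMeasurable Y) (hX : DMeasurable X) (hZ : DMeasurable Z)
    (x : 𝒳) (z : 𝒵) : ∑ y : 𝒴, P3 μ X Y Z x y z = P2 μ X Z x z := by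
  rw [P2, ← sum_measure_inter hY (pair_meas hX hZ x z)]
  apply Finset.sum_congr rfl; intro y _
  rw [P3]
  congr 2
  ext ω
  simp only [Set.mem_inter_iff, Set.mem_preimage, Set.mem_singleton_iff]
  tauto

lemma mar_x (hX : DMeasurable X) (hY : DMeasurable Y) (hZ : DMeasurable Z)
    (y : 𝒴) (z : 𝒵) : ∑ x : 𝒳, P3 μ X Y Z x y z = P2 μ Y Z y z := by
  rw [P2, ← sum_measure_inter hX (pair_meas hY hZ y z)]
  apply Finset.sum_congr rfl; intro x _
  rw [P3]
  congr 2
  ext ω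
  simp only [Set.mem_inter_iff, Set.mem_preimage, Set.mem_singleton_iff]
  tauto

lemma mar2 (hX : DMeasurable X) (hZ : DMeasurable Z) (z : 𝒵) :
    ∑ x : 𝒳, P2 μ X Z x z = P1 μ Z z := by
  rw [P1, ← sum_measure_inter hX (hZ z)]
  apply Finset.sum_congr rfl; intro x _
  rw [P2, Set.inter_comm]

lemma sum_P1 (hZ : DMeasurable Z) : ∑ z : 𝒵, P1 μ Z z = 1 := by
  have := sum_measure_inter (μ := μ) hZ MeasurableSet.univ
  simp only [Set.univ_inter] at this
  simp only [P1]
  rw [this]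
  simp

end CMI

section CMI2
variable {Ω : Type*} [MeasurableSpace Ω] {μ : Measure Ω} [IsProbabilityMeasure μ]
variable {𝒳 𝒴 𝒵 : Type*} [Fintype 𝒳] [Fintype 𝒴] [Fintype 𝒵]
variable {X : Ω → 𝒳} {Y : Ω → 𝒴} {Z : Ω → 𝒵}

lemma ent_pair_eq' (W : Ω → 𝒳) (T : Ω → 𝒵) :
    ent μ (fun ω => (W ω, T ω)) = ∑ x : 𝒳, ∑ z : 𝒵, hh (P2 μ W T x z) := by
  rw [ent_fin, Fintype.sum_prod_type]
  apply Finset.sum_congr rfl; intro x _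
  apply Finset.sum_congr rfl; intro z _
  rw [pair_preimage, P2]

lemma ent_triple_eq :
    ent μ (fun ω => (X ω, Y ω, Z ω)) =
      ∑ x : 𝒳, ∑ y : 𝒴, ∑ z : 𝒵, hh (P3 μ X Y Z x y z) := by
  rw [ent_fin, Fintype.sum_prod_type]
  apply Finset.sum_congr rfl; intro x _
  rw [Fintype.sum_prod_type]
  apply Finset.sum_congr rfl; intro y _
  apply Finset.sum_congr rfl; intro z _
  have hset : (fun ω => (X ω, Y ω, Z ω)) ⁻¹' {(x, y, z)}
      = X ⁻¹' {x} ∩ Y ⁻¹' {y} ∩ Z ⁻¹' {z} := by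
    ext ω
    simp only [Set.mem_preimage, Set.mem_singleton_iff, Prod.ext_iff,
      Set.mem_inter_iff]
    tauto
  rw [P3, hset]

lemma ent_P1_eq : ent μ Z = ∑ z : 𝒵, hh (P1 μ Z z) := by
  rw [ent_fin]; apply Finset.sum_congr rfl; intro z _; rw [P1]

/-- The q-distribution for conditional independence. -/
noncomputable def QQ {Ω 𝒳 𝒴 𝒵 : Type*} [MeasurableSpace Ω] (μ : Measure Ω)
    (X : Ω → 𝒳) (Y : Ω → 𝒴) (Z : Ω → 𝒵) (x : 𝒳) (y : 𝒴) (z : 𝒵) : ℝ :=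
  P2 μ X Z x z * P2 μ Y Z y z / P1 μ Z z

lemma cmi_eq_kl (hX : DMeasurable X) (hY : DMeasurable Y) (hZ : DMeasurable Z) :
    cmi μ X Y Z = (∑ x : 𝒳, ∑ y : 𝒴, ∑ z : 𝒵,
      P3 μ X Y Z x y z *
        (Real.log (P3 μ X Y Z x y z) - Real.log (QQ μ X Y Z x y z))) / Real.log 2 := by
  have hlog2 : Real.log 2 ≠ 0 := ne_of_gt (Real.log_pos (by norm_num))
  -- expand the four entropies into triple sums
  have hA : ent μ (fun ω => (X ω, Z ω)) =
      ∑ x : 𝒳, ∑ y : 𝒴, ∑ z : 𝒵, -(P3 μ X Y Z x y z * Real.logb 2 (P2 μ X Z x z)) := by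
    rw [ent_pair_eq']
    apply Finset.sum_congr rfl; intro x _
    rw [Finset.sum_comm]
    apply Finset.sum_congr rfl; intro z _
    rw [hh, ← mar_y hY hX hZ, Finset.sum_mul, ← Finset.sum_neg_distrib]
  have hB : ent μ (fun ω => (Y ω, Z ω)) =
      ∑ x : 𝒳, ∑ y : 𝒴, ∑ z : 𝒵, -(P3 μ X Y Z x y z * Real.logb 2 (P2 μ Y Z y z)) := by
    rw [ent_pair_eq']
    rw [show ∑ x : 𝒳, ∑ y : 𝒴, ∑ z : 𝒵, -(P3 μ X Y Z x y z * Real.logb 2 (P2 μ Y Z y z))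
        = ∑ y : 𝒴, ∑ x : 𝒳, ∑ z : 𝒵, -(P3 μ X Y Z x y z * Real.logb 2 (P2 μ Y Z y z))
      from Finset.sum_comm]
    apply Finset.sum_congr rfl; intro y _
    rw [Finset.sum_comm]
    apply Finset.sum_congr rfl; intro z _
    rw [hh, ← mar_x hX hY hZ, Finset.sum_mul, ← Finset.sum_neg_distrib]
  have hD : ent μ Z =
      ∑ x : 𝒳, ∑ y : 𝒴, ∑ z : 𝒵, -(P3 μ X Y Z x y z * Real.logb 2 (P1 μ Z z)) := by
    rw [ent_P1_eq]
    rw [show ∑ x : 𝒳, ∑ y : 𝒴, ∑ z : 𝒵, -(P3 μ X Y Z x y z * Real.logb 2 (P1 μ Z z))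
        = ∑ y : 𝒴, ∑ x : 𝒳, ∑ z : 𝒵, -(P3 μ X Y Z x y z * Real.logb 2 (P1 μ Z z))
      from Finset.sum_comm]
    rw [show ∑ y : 𝒴, ∑ x : 𝒳, ∑ z : 𝒵, -(P3 μ X Y Z x y z * Real.logb 2 (P1 μ Z z))
        = ∑ y : 𝒴, ∑ z : 𝒵, ∑ x : 𝒳, -(P3 μ X Y Z x y z * Real.logb 2 (P1 μ Z z))
      from Finset.sum_congr rfl (fun y _ => Finset.sum_comm)]
    rw [show ∑ y : 𝒴, ∑ z : 𝒵, ∑ x : 𝒳, -(P3 μ X Y Z x y z * Real.logb 2 (P1 μ Z z))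
        = ∑ z : 𝒵, ∑ y : 𝒴, ∑ x : 𝒳, -(P3 μ X Y Z x y z * Real.logb 2 (P1 μ Z z))
      from Finset.sum_comm]
    apply Finset.sum_congr rfl; intro z _
    rw [hh, ← mar2 hX hZ, Finset.sum_mul, ← Finset.sum_neg_distrib]
    rw [show ∑ y : 𝒴, ∑ x : 𝒳, -(P3 μ X Y Z x y z * Real.logb 2 (∑ x : 𝒳, P2 μ X Z x z))
        = ∑ x : 𝒳, ∑ y : 𝒴, -(P3 μ X Y Z x y z * Real.logb 2 (∑ x : 𝒳, P2 μ X Z x z))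
      from Finset.sum_comm]
    apply Finset.sum_congr rfl; intro x _
    rw [← mar_y hY hX hZ (z := z), Finset.sum_mul, ← Finset.sum_neg_distrib]
  have hC : ent μ (fun ω => (X ω, Y ω, Z ω)) =
      ∑ x : 𝒳, ∑ y : 𝒴, ∑ z : 𝒵, hh (P3 μ X Y Z x y z) := ent_triple_eq
  rw [cmi, hA, hB, hC, hD]
  rw [eq_div_iff hlog2]
  rw [← Finset.sum_add_distrib, ← Finset.sum_sub_distrib, ← Finset.sum_sub_distrib,
    Finset.sum_mul]
  apply Finset.sum_congr rfl; intro x _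
  rw [← Finset.sum_add_distrib, ← Finset.sum_sub_distrib, ← Finset.sum_sub_distrib,
    Finset.sum_mul]
  apply Finset.sum_congr rfl; intro y _
  rw [← Finset.sum_add_distrib, ← Finset.sum_sub_distrib, ← Finset.sum_sub_distrib,
    Finset.sum_mul]
  apply Finset.sum_congr rfl; intro z _
  -- pointwise identity
  rcases eq_or_ne (P3 μ X Y Z x y z) 0 with h0 | h0
  · rw [h0]; simp [hh]
  · have hp : 0 < P3 μ X Y Z x y z := lt_of_le_of_ne (P3_nonneg x y z) (Ne.symm h0)
    have hxz : 0 < P2 μ X Z x z := lt_of_lt_of_le hp (P3_le_PXZ x y z)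
    have hyz : 0 < P2 μ Y Z y z := lt_of_lt_of_le hp (P3_le_PYZ x y z)
    have hz1 : 0 < P1 μ Z z := lt_of_lt_of_le hxz (P2_le_P1 x z)
    have hq : Real.log (QQ μ X Y Z x y z)
        = Real.log (P2 μ X Z x z) + Real.log (P2 μ Y Z y z) - Real.log (P1 μ Z z) := by
      rw [QQ, Real.log_div (by positivity) (ne_of_gt hz1), Real.log_mul
        (ne_of_gt hxz) (ne_of_gt hyz)]
    rw [hq]
    simp only [hh, Real.logb]
    field_simp
    ring

lemma QQ_mar (hX : DMeasurable X) (hY : DMeasurable Y) (hZ : DMeasurable Z)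
    (x : 𝒳) (z : 𝒵) : ∑ y : 𝒴, QQ μ X Y Z x y z = P2 μ X Z x z := by
  simp only [QQ]
  rw [show ∑ y : 𝒴, P2 μ X Z x z * P2 μ Y Z y z / P1 μ Z z
      = P2 μ X Z x z * (∑ y : 𝒴, P2 μ Y Z y z) / P1 μ Z z by
    rw [Finset.mul_sum, Finset.sum_div]]
  rw [mar2 hY hZ]
  rcases eq_or_ne (P1 μ Z z) 0 with h0 | h0
  · have : P2 μ X Z x z = 0 :=
      le_antisymm (h0 ▸ P2_le_P1 x z) (P2_nonneg x z)
    rw [this, h0]; simp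
  · field_simp

lemma sum3_eq (f : 𝒳 × 𝒴 × 𝒵 → ℝ) :
    ∑ i : 𝒳 × 𝒴 × 𝒵, f i = ∑ x : 𝒳, ∑ y : 𝒴, ∑ z : 𝒵, f (x, y, z) := by
  rw [Fintype.sum_prod_type]
  apply Finset.sum_congr rfl; intro x _
  rw [Fintype.sum_prod_type]

lemma cmi_char (hX : DMeasurable X) (hY : DMeasurable Y) (hZ : DMeasurable Z) :
    cmi μ X Y Z = 0 ↔
      ∀ x y z, P3 μ X Y Z x y z * P1 μ Z z = P2 μ X Z x z * P2 μ Y Z y z := by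
  have hlog2 : Real.log 2 ≠ 0 := ne_of_gt (Real.log_pos (by norm_num))
  set p : 𝒳 × 𝒴 × 𝒵 → ℝ := fun i => P3 μ X Y Z i.1 i.2.1 i.2.2 with hp
  set q : 𝒳 × 𝒴 × 𝒵 → ℝ := fun i => QQ μ X Y Z i.1 i.2.1 i.2.2 with hq
  have hsum_p : ∑ i : 𝒳 × 𝒴 × 𝒵, p i = 1 := by
    rw [sum3_eq]
    have : ∀ x, ∑ y : 𝒴, ∑ z : 𝒵, P3 μ X Y Z x y z = ∑ z : 𝒵, P2 μ X Z x z := by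
      intro x
      rw [Finset.sum_comm]
      exact Finset.sum_congr rfl (fun z _ => mar_y hY hX hZ x z)
    calc ∑ x : 𝒳, ∑ y : 𝒴, ∑ z : 𝒵, p (x, y, z)
        = ∑ x : 𝒳, ∑ z : 𝒵, P2 μ X Z x z := Finset.sum_congr rfl (fun x _ => this x)
      _ = ∑ z : 𝒵, ∑ x : 𝒳, P2 μ X Z x z := Finset.sum_comm
      _ = ∑ z : 𝒵, P1 μ Z z := Finset.sum_congr rfl (fun z _ => mar2 hX hZ z)
      _ = 1 := sum_P1 hZ
  have hsum_q : ∑ i : 𝒳 × 𝒴 × 𝒵, q i = 1 := by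
    rw [sum3_eq]
    have : ∀ x, ∑ y : 𝒴, ∑ z : 𝒵, QQ μ X Y Z x y z = ∑ z : 𝒵, P2 μ X Z x z := by
      intro x
      rw [Finset.sum_comm]
      exact Finset.sum_congr rfl (fun z _ => QQ_mar hX hY hZ x z)
    calc ∑ x : 𝒳, ∑ y : 𝒴, ∑ z : 𝒵, q (x, y, z)
        = ∑ x : 𝒳, ∑ z : 𝒵, P2 μ X Z x z := Finset.sum_congr rfl (fun x _ => this x)
      _ = ∑ z : 𝒵, ∑ x : 𝒳, P2 μ X Z x z := Finset.sum_comm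
      _ = ∑ z : 𝒵, P1 μ Z z := Finset.sum_congr rfl (fun z _ => mar2 hX hZ z)
      _ = 1 := sum_P1 hZ
  have hqq : ∀ i ∈ Finset.univ (α := 𝒳 × 𝒴 × 𝒵), p i ≠ 0 → 0 < q i := by
    rintro ⟨x, y, z⟩ - h0
    have hp0 : 0 < P3 μ X Y Z x y z :=
      lt_of_le_of_ne (P3_nonneg x y z) (Ne.symm h0)
    have hxz : 0 < P2 μ X Z x z := lt_of_lt_of_le hp0 (P3_le_PXZ x y z)
    have hyz : 0 < P2 μ Y Z y z := lt_of_lt_of_le hp0 (P3_le_PYZ x y z)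
    have hz1 : 0 < P1 μ Z z := lt_of_lt_of_le hxz (P2_le_P1 x z)
    exact div_pos (mul_pos hxz hyz) hz1
  obtain ⟨hge, heqc⟩ := gibbs Finset.univ p q (fun i _ => ENNReal.toReal_nonneg)
    (fun i _ => by
      rcases i with ⟨x, y, z⟩
      exact div_nonneg (mul_nonneg (P2_nonneg x z) (P2_nonneg y z)) (P1_nonneg z))
    hqq hsum_p hsum_q
  have hkl : cmi μ X Y Z
      = (∑ i : 𝒳 × 𝒴 × 𝒵, p i * (Real.log (p i) - Real.log (q i))) / Real.log 2 := by
    rw [cmi_eq_kl hX hY hZ, sum3_eq (fun i => p i * (Real.log (p i) - Real.log (q i)))]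
  constructor
  · intro h0 x y z
    rw [hkl, div_eq_zero_iff] at h0
    have hL : ∑ i : 𝒳 × 𝒴 × 𝒵, p i * (Real.log (p i) - Real.log (q i)) = 0 := by
      rcases h0 with h | h
      · exact h
      · exact absurd h hlog2
    have hpqe := heqc hL (x, y, z) (Finset.mem_univ _)
    simp only [hp, hq] at hpqe
    rcases eq_or_ne (P1 μ Z z) 0 with h1 | h1
    · have h2 : P2 μ X Z x z = 0 := le_antisymm (h1 ▸ P2_le_P1 x z) (P2_nonneg x z)
      rw [h1, h2]; ring
    · have : P3 μ X Y Z x y z = P2 μ X Z x z * P2 μ Y Z y z / P1 μ Z z := hpqe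
      field_simp at this
      linarith [this]
  · intro hfact
    have hpe : ∀ i ∈ Finset.univ (α := 𝒳 × 𝒴 × 𝒵), p i = q i := by
      rintro ⟨x, y, z⟩ -
      show P3 μ X Y Z x y z = QQ μ X Y Z x y z
      rcases eq_or_ne (P1 μ Z z) 0 with h1 | h1
      · have h2 : P2 μ X Z x z = 0 := le_antisymm (h1 ▸ P2_le_P1 x z) (P2_nonneg x z)
        have h3 : P3 μ X Y Z x y z = 0 :=
          le_antisymm (h2 ▸ P3_le_PXZ x y z) (P3_nonneg x y z)
        rw [h3, QQ, h2]; simp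
      · rw [QQ, eq_div_iff h1]; exact hfact x y z
    rw [hkl]
    have : ∑ i : 𝒳 × 𝒴 × 𝒵, p i * (Real.log (p i) - Real.log (q i)) = 0 := by
      apply Finset.sum_eq_zero
      intro i hi
      rw [hpe i hi]; ring
    rw [this, zero_div]

end CMI2

lemma choose_congr {α : Sort*} {P Q : α → Prop} (h : P = Q) (hp : ∃ x, P x) (hq : ∃ x, Q x) :
    Classical.choose hp = Classical.choose hq := by subst h; rfl

lemma dmeas_preimage {Ω S : Type*} [MeasurableSpace Ω] {X : Ω → S} [Countable S]
    (hX : DMeasurable X) (A : Set S) : MeasurableSet (X ⁻¹' A) := by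
  have h : X ⁻¹' A = ⋃ s ∈ A, X ⁻¹' {s} := by ext ω; simp
  rw [h]
  exact MeasurableSet.biUnion (Set.to_countable A) (fun s _ => hX s)

/-- Existence of the minimal sufficient statistic. -/
theorem minimal_sufficient_statistic {Ω 𝒳 𝒴 : Type} [MeasurableSpace Ω] (μ : Measure Ω)
    [IsProbabilityMeasure μ] [Fintype 𝒳] [Fintype 𝒴]
    (X : Ω → 𝒳) (Y : Ω → 𝒴) (hX : DMeasurable X) (hY : DMeasurable Y) :
    ∃ (𝒰 : Type) (_ : Fintype 𝒰) (U : Ω → 𝒰), DMeasurable U ∧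
      condEnt μ U X = 0 ∧ cmi μ X Y U = 0 ∧
      ∀ (𝒱 : Type) (_ : Fintype 𝒱) (V : Ω → 𝒱), DMeasurable V →
        condEnt μ V X = 0 → cmi μ X Y V = 0 → condEnt μ U V = 0 := by
  classical
  have hΩne : Nonempty Ω := by
    by_contra h
    rw [not_nonempty_iff] at h
    have h1 : μ Set.univ = 1 := measure_univ
    have h2 : (Set.univ : Set Ω) = ∅ := Set.univ_eq_empty_iff.mpr h
    rw [h2, measure_empty] at h1
    exact zero_ne_one h1
  have hXne : Nonempty 𝒳 := ⟨X (Classical.arbitrary Ω)⟩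
  set pX : 𝒳 → ℝ := fun x => (μ (X ⁻¹' {x})).toReal with hpX
  set pXY : 𝒳 → 𝒴 → ℝ := fun x y => (μ (X ⁻¹' {x} ∩ Y ⁻¹' {y})).toReal with hpXY
  set f : 𝒳 → 𝒴 → ℝ := fun x y => pXY x y / pX x with hf
  have hex : ∀ x : 𝒳, ∃ x', f x' = f x := fun x => ⟨x, rfl⟩
  set r : 𝒳 → 𝒳 := fun x => Classical.choose (hex x) with hr
  have hr_spec : ∀ x, f (r x) = f x := fun x => Classical.choose_spec (hex x)
  have hr_eq : ∀ x x', f x = f x' → r x = r x' := by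
    intro x x' h
    exact choose_congr (by funext t; rw [h]) (hex x) (hex x')
  have hrr : ∀ x x', r x = r x' → f x = f x' := by
    intro x x' h
    rw [← hr_spec x, h, hr_spec x']
  have hPle : ∀ x y, pXY x y ≤ pX x := fun x y =>
    toReal_mono_subset Set.inter_subset_left
  have hPnn : ∀ x y, 0 ≤ pXY x y := fun _ _ => ENNReal.toReal_nonneg
  have hXnn : ∀ x, 0 ≤ pX x := fun _ => ENNReal.toReal_nonneg
  have cross : ∀ x x' y, f x = f x' → pXY x y * pX x' = pX x * pXY x' y := by
    intro x x' y h
    rcases eq_or_ne (pX x) 0 with h0 | h0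
    · have hz : pXY x y = 0 := le_antisymm (h0 ▸ hPle x y) (hPnn x y)
      rw [hz, h0]; ring
    rcases eq_or_ne (pX x') 0 with h1 | h1
    · have hz : pXY x' y = 0 := le_antisymm (h1 ▸ hPle x' y) (hPnn x' y)
      rw [hz, h1]; ring
    have hfy : pXY x y / pX x = pXY x' y / pX x' := congrFun h y
    rw [mul_comm (pX x)]
    exact (div_eq_div_iff h0 h1).mp hfy
  have hU : DMeasurable (fun ω => r (X ω)) := by
    intro u
    have h : (fun ω => r (X ω)) ⁻¹' {u} = X ⁻¹' (r ⁻¹' {u}) := rfl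
    rw [h]
    exact dmeas_preimage hX _
  refine ⟨𝒳, inferInstance, fun ω => r (X ω), hU, ?_, ?_, ?_⟩
  · -- H(U | X) = 0
    apply condEnt_zero_of_fun _ _ hU hX r
    intro u x hux
    have hset : (fun ω => r (X ω)) ⁻¹' {u} ∩ X ⁻¹' {x} = ∅ := by
      ext ω
      simp only [Set.mem_inter_iff, Set.mem_preimage, Set.mem_singleton_iff,
        Set.mem_empty_iff_false, iff_false, not_and]
      intro h1 h2
      apply hux
      rw [← h1, h2]
    rw [hset]
    simp
  · -- I(X ; Y | U) = 0
    apply (cmi_char hX hY hU).mpr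
    intro x y u
    have hP3U : P3 μ X Y (fun ω => r (X ω)) x y u
        = if r x = u then pXY x y else 0 := by
      by_cases h : r x = u
      · rw [if_pos h, P3]
        have hset : X ⁻¹' {x} ∩ Y ⁻¹' {y} ∩ (fun ω => r (X ω)) ⁻¹' {u}
            = X ⁻¹' {x} ∩ Y ⁻¹' {y} := by
          ext ω
          simp only [Set.mem_inter_iff, Set.mem_preimage, Set.mem_singleton_iff]
          constructor
          · rintro ⟨hxy, -⟩; exact hxy
          · rintro ⟨h1, h2⟩; exact ⟨⟨h1, h2⟩, by rw [h1, h]⟩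
        rw [hset]
      · rw [if_neg h, P3]
        have hset : X ⁻¹' {x} ∩ Y ⁻¹' {y} ∩ (fun ω => r (X ω)) ⁻¹' {u} = ∅ := by
          ext ω
          simp only [Set.mem_inter_iff, Set.mem_preimage, Set.mem_singleton_iff,
            Set.mem_empty_iff_false, iff_false, not_and]
          rintro ⟨h1, h2⟩ h3
          apply h
          rw [← h1]; exact h3
        rw [hset]
        simp
    have hP2XU : P2 μ X (fun ω => r (X ω)) x u
        = if r x = u then pX x else 0 := by
      by_cases h : r x = u
      · rw [if_pos h, P2]
        have hset : X ⁻¹' {x} ∩ (fun ω => r (X ω)) ⁻¹' {u} = X ⁻¹' {x} := by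
          ext ω
          simp only [Set.mem_inter_iff, Set.mem_preimage, Set.mem_singleton_iff]
          constructor
          · rintro ⟨h1, -⟩; exact h1
          · intro h1; exact ⟨h1, by rw [h1, h]⟩
        rw [hset]
      · rw [if_neg h, P2]
        have hset : X ⁻¹' {x} ∩ (fun ω => r (X ω)) ⁻¹' {u} = ∅ := by
          ext ω
          simp only [Set.mem_inter_iff, Set.mem_preimage, Set.mem_singleton_iff,
            Set.mem_empty_iff_false, iff_false, not_and]
          intro h1 h3
          apply h
          rw [← h1]; exact h3
        rw [hset]
        simp
    have hP2YU : P2 μ Y (fun ω => r (X ω)) y u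
        = ∑ x' : 𝒳, if r x' = u then pXY x' y else 0 := by
      rw [P2, ← sum_measure_inter hX ((hY y).inter (hU u))]
      apply Finset.sum_congr rfl; intro x' _
      by_cases h : r x' = u
      · rw [if_pos h]
        have hset : Y ⁻¹' {y} ∩ (fun ω => r (X ω)) ⁻¹' {u} ∩ X ⁻¹' {x'}
            = X ⁻¹' {x'} ∩ Y ⁻¹' {y} := by
          ext ω
          simp only [Set.mem_inter_iff, Set.mem_preimage, Set.mem_singleton_iff]
          constructor
          · rintro ⟨⟨h1, -⟩, h2⟩; exact ⟨h2, h1⟩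
          · rintro ⟨h1, h2⟩; exact ⟨⟨h2, by rw [h1, h]⟩, h1⟩
        rw [hset]
      · rw [if_neg h]
        have hset : Y ⁻¹' {y} ∩ (fun ω => r (X ω)) ⁻¹' {u} ∩ X ⁻¹' {x'} = ∅ := by
          ext ω
          simp only [Set.mem_inter_iff, Set.mem_preimage, Set.mem_singleton_iff,
            Set.mem_empty_iff_false, iff_false, not_and]
          rintro ⟨-, h2⟩ h3
          apply h
          rw [← h3]; exact h2
        rw [hset]
        simp
    have hP1U : P1 μ (fun ω => r (X ω)) u
        = ∑ x' : 𝒳, if r x' = u then pX x' else 0 := by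
      rw [P1, ← sum_measure_inter hX (hU u)]
      apply Finset.sum_congr rfl; intro x' _
      by_cases h : r x' = u
      · rw [if_pos h]
        have hset : (fun ω => r (X ω)) ⁻¹' {u} ∩ X ⁻¹' {x'} = X ⁻¹' {x'} := by
          ext ω
          simp only [Set.mem_inter_iff, Set.mem_preimage, Set.mem_singleton_iff]
          constructor
          · rintro ⟨-, h1⟩; exact h1
          · intro h1; exact ⟨by rw [h1, h], h1⟩
        rw [hset]
      · rw [if_neg h]
        have hset : (fun ω => r (X ω)) ⁻¹' {u} ∩ X ⁻¹' {x'} = ∅ := by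
          ext ω
          simp only [Set.mem_inter_iff, Set.mem_preimage, Set.mem_singleton_iff,
            Set.mem_empty_iff_false, iff_false, not_and]
          intro h1 h3
          apply h
          rw [← h3]; exact h1
        rw [hset]
        simp
    rw [hP3U, hP2XU, hP2YU, hP1U]
    by_cases h : r x = u
    · rw [if_pos h, if_pos h, Finset.mul_sum, Finset.mul_sum]
      apply Finset.sum_congr rfl; intro x' _
      by_cases h' : r x' = u
      · rw [if_pos h', if_pos h']
        exact cross x x' y (hrr x x' (by rw [h, h']))
      · rw [if_neg h', if_neg h']
        ring
    · rw [if_neg h, if_neg h]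
      ring
  · -- minimality
    intro 𝒱 _ V hV hVX hcmiV
    have h𝒱ne : Nonempty 𝒱 := ⟨V (Classical.arbitrary Ω)⟩
    have hdet := determ_of_condEnt_zero V X hV hX hVX
    set pXV : 𝒳 → 𝒱 → ℝ := fun x v => (μ (X ⁻¹' {x} ∩ V ⁻¹' {v})).toReal with hpXV
    have hdet' : ∀ x v, pXV x v = 0 ∨ pXV x v = pX x := by
      intro x v
      have h := hdet v x
      have hcomm : V ⁻¹' {v} ∩ X ⁻¹' {x} = X ⁻¹' {x} ∩ V ⁻¹' {v} := Set.inter_comm _ _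
      rw [hcomm] at h
      exact h
    have hXVnn : ∀ x v, 0 ≤ pXV x v := fun _ _ => ENNReal.toReal_nonneg
    have huniq : ∀ x v v', pXV x v ≠ 0 → pXV x v' ≠ 0 → v = v' := by
      intro x v v' h1 h2
      by_contra hne
      have hsum : ∑ v'' : 𝒱, pXV x v'' = pX x := sum_measure_inter hV (hX x)
      have hv : pXV x v = pX x := (hdet' x v).resolve_left h1
      have hv' : pXV x v' = pX x := (hdet' x v').resolve_left h2
      have h3 : pXV x v' ≤ ∑ v'' ∈ Finset.univ.erase v, pXV x v'' :=
        Finset.single_le_sum (fun i _ => hXVnn x i)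
          (Finset.mem_erase.mpr ⟨Ne.symm hne, Finset.mem_univ _⟩)
      have h4 : pXV x v + ∑ v'' ∈ Finset.univ.erase v, pXV x v''
          = ∑ v'' : 𝒱, pXV x v'' := Finset.add_sum_erase _ _ (Finset.mem_univ v)
      have hpos : 0 < pX x := lt_of_le_of_ne (hXnn x) (fun hc => h1 (by rw [hv, ← hc]))
      rw [hsum] at h4
      rw [hv] at h4
      rw [hv'] at h3
      linarith
    have hfact := (cmi_char hX hY hV).mp hcmiV
    have claim : ∀ v x, pXV x v ≠ 0 → ∀ y, f x y = P2 μ Y V y v / P1 μ V v := by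
      intro v x hxv y
      have hvx : pXV x v = pX x := (hdet' x v).resolve_left hxv
      have hpx : pX x ≠ 0 := fun hc => hxv (by rw [hvx, hc])
      have hsum : ∑ v' : 𝒱, P3 μ X Y V x y v' = pXY x y := by
        simp only [P3]
        exact sum_measure_inter hV ((hX x).inter (hY y))
      have hzero : ∀ v', v' ≠ v → P3 μ X Y V x y v' = 0 := by
        intro v' hne
        have h1 : P3 μ X Y V x y v' ≤ pXV x v' := by
          apply toReal_mono_subset
          rintro ω ⟨⟨ha, hb⟩, hc⟩
          exact ⟨ha, hc⟩
        have h2 : pXV x v' = 0 := by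
          by_contra h2
          exact hne (huniq x v' v h2 hxv)
        exact le_antisymm (h2 ▸ h1) (P3_nonneg _ _ _)
      have hP3v : P3 μ X Y V x y v = pXY x y := by
        rw [← hsum]
        exact (Finset.sum_eq_single v (fun v' _ h => hzero v' h)
          (fun h => absurd (Finset.mem_univ v) h)).symm
      have hf2 := hfact x y v
      have hP2e : P2 μ X V x v = pXV x v := rfl
      rw [hP3v, hP2e, hvx] at hf2
      have hP1pos : 0 < P1 μ V v := by
        have h5 : pXV x v ≤ P1 μ V v := P2_le_P1 x v
        have h6 : 0 < pXV x v := lt_of_le_of_ne (hXVnn x v) (Ne.symm hxv)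
        linarith
      have hgoal : pXY x y / pX x = P2 μ Y V y v / P1 μ V v := by
        rw [div_eq_div_iff hpx (ne_of_gt hP1pos)]
        linarith [hf2]
      exact hgoal
    have claim2 : ∀ v x x', pXV x v ≠ 0 → pXV x' v ≠ 0 → r x = r x' := by
      intro v x x' h1 h2
      apply hr_eq
      funext y
      rw [claim v x h1 y, claim v x' h2 y]
    apply condEnt_zero_of_fun _ _ hU hV
        (fun v => if h : ∃ x, pXV x v ≠ 0 then r (Classical.choose h)
          else r (Classical.arbitrary 𝒳))
    intro u v huv
    by_contra hne0
    have hsum : ∑ x' : 𝒳,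
        (μ ((fun ω => r (X ω)) ⁻¹' {u} ∩ V ⁻¹' {v} ∩ X ⁻¹' {x'})).toReal
        = (μ ((fun ω => r (X ω)) ⁻¹' {u} ∩ V ⁻¹' {v})).toReal :=
      sum_measure_inter hX ((hU u).inter (hV v))
    have hexx : ∃ x', (μ ((fun ω => r (X ω)) ⁻¹' {u} ∩ V ⁻¹' {v} ∩ X ⁻¹' {x'})).toReal ≠ 0 := by
      by_contra hall
      push_neg at hall
      apply hne0
      rw [← hsum]
      exact Finset.sum_eq_zero (fun x' _ => hall x')
    obtain ⟨x', hx'⟩ := hexx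
    have hrx' : r x' = u := by
      by_contra hru
      apply hx'
      have hset : (fun ω => r (X ω)) ⁻¹' {u} ∩ V ⁻¹' {v} ∩ X ⁻¹' {x'} = ∅ := by
        ext ω
        simp only [Set.mem_inter_iff, Set.mem_preimage, Set.mem_singleton_iff,
          Set.mem_empty_iff_false, iff_false, not_and]
        rintro ⟨h1, -⟩ h3
        apply hru
        rw [← h3]; exact h1
      rw [hset]
      simp
    have hxv' : pXV x' v ≠ 0 := by
      intro hz
      apply hx'
      have hle : (μ ((fun ω => r (X ω)) ⁻¹' {u} ∩ V ⁻¹' {v} ∩ X ⁻¹' {x'})).toReal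
          ≤ pXV x' v := by
        apply toReal_mono_subset
        rintro ω ⟨⟨-, hb⟩, hc⟩
        exact ⟨hc, hb⟩
      have := ENNReal.toReal_nonneg
        (a := μ ((fun ω => r (X ω)) ⁻¹' {u} ∩ V ⁻¹' {v} ∩ X ⁻¹' {x'}))
      rw [hz] at hle
      linarith
    have hex2 : ∃ x, pXV x v ≠ 0 := ⟨x', hxv'⟩
    apply huv
    have hGv : (if h : ∃ x, pXV x v ≠ 0 then r (Classical.choose h)
        else r (Classical.arbitrary 𝒳)) = r (Classical.choose hex2) := dif_pos hex2
    rw [hGv, ← hrx']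
    exact claim2 v x' (Classical.choose hex2) hxv' (Classical.choose_spec hex2)
end
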